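/- arXiv:2311.11497 — 7 statements merged into one kernel-verified Lean document; each statement's English description precedes it below -/
import Mathlib

section
/- Let n be a positive integer having a prime factor p such that p divides φ(n), where φ is Euler's totient function. Then there exists a transitive permutation group G of degree n containing a normal transitive subgroup N₁ of index p and a normal non-transitive subgroup N₂ of index p. -/
namespace Stmt1Aux

variable {n : ℕ} [NeZero n]

/-- The equivalence between `ZMod n` and `Fin n`. -/
noncomputable def ee (n : ℕ) [NeZero n] : ZMod n ≃ Fin n where
  toFun x := ⟨x.val, ZMod.val_lt x⟩
  invFun i := (i : ℕ)
  left_inv x := by simp [ZMod.natCast_val, ZMod.cast_id]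
  right_inv i := by
    ext
    simp [ZMod.val_natCast_of_lt i.isLt]

/-- The affine permutation `x ↦ v * x + a` of `ZMod n`. -/
def aff (v : (ZMod n)ˣ) (a : ZMod n) : Equiv.Perm (ZMod n) where
  toFun x := v * x + a
  invFun x := (v⁻¹ : (ZMod n)ˣ) * (x - a)
  left_inv x := by
    simp only [add_sub_cancel_right, ← mul_assoc, Units.inv_mul, one_mul]
  right_inv x := by
    simp only [← mul_assoc, Units.mul_inv, one_mul, sub_add_cancel]

/-- The corresponding permutation of `Fin n`. -/
noncomputable def pr (v : (ZMod n)ˣ) (a : ZMod n) : Equiv.Perm (Fin n) :=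
  (ee n).permCongr (aff v a)

lemma pr_apply (v : (ZMod n)ˣ) (a x : ZMod n) :
    pr v a (ee n x) = ee n (v * x + a) := by
  simp [pr, aff, Equiv.permCongr_apply]

lemma pr_one : (pr (1 : (ZMod n)ˣ) 0) = 1 := by
  refine Equiv.ext fun i => ?_
  conv_lhs => rw [show i = ee n ((ee n).symm i) from (Equiv.apply_symm_apply _ _).symm]
  rw [pr_apply]
  simp

lemma pr_mul (v w : (ZMod n)ˣ) (a b : ZMod n) :
    pr v a * pr w b = pr (v * w) ((v : ZMod n) * b + a) := by
  ext i
  have hi : i = ee n ((ee n).symm i) := (Equiv.apply_symm_apply _ _).symm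
  rw [hi]
  simp only [Equiv.Perm.mul_apply, pr_apply]
  congr 1
  push_cast
  ring

lemma pr_inv (v : (ZMod n)ˣ) (a : ZMod n) :
    (pr v a)⁻¹ = pr v⁻¹ (-((v⁻¹ : (ZMod n)ˣ) * a)) := by
  rw [eq_comm, eq_inv_iff_mul_eq_one, pr_mul]
  rw [show v⁻¹ * v = 1 by group]
  rw [show ((v⁻¹ : (ZMod n)ˣ) : ZMod n) * a + -((v⁻¹ : (ZMod n)ˣ) * a) = 0 by ring]
  exact pr_one

/-- The "multiplier" of a permutation (meaningful on affine ones). -/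
noncomputable def mlt (σ : Equiv.Perm (Fin n)) : ZMod n :=
  (ee n).symm (σ (ee n 1)) - (ee n).symm (σ (ee n 0))

/-- The "translation part" of a permutation. -/
noncomputable def tsl (σ : Equiv.Perm (Fin n)) : ZMod n :=
  (ee n).symm (σ (ee n 0))

lemma mlt_pr (v : (ZMod n)ˣ) (a : ZMod n) : mlt (pr v a) = v := by
  simp [mlt, pr_apply]

lemma tsl_pr (v : (ZMod n)ˣ) (a : ZMod n) : tsl (pr v a) = a := by
  simp [tsl, pr_apply]

/-- The full affine-type group with multipliers in `⟨u⟩`. -/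
noncomputable def Gs (u : (ZMod n)ˣ) : Subgroup (Equiv.Perm (Fin n)) where
  carrier := {σ | ∃ v ∈ Subgroup.zpowers u, ∃ a : ZMod n, σ = pr v a}
  one_mem' := ⟨1, one_mem _, 0, pr_one.symm⟩
  mul_mem' := by
    rintro _ _ ⟨v, hv, a, rfl⟩ ⟨w, hw, b, rfl⟩
    exact ⟨v * w, mul_mem hv hw, (v : ZMod n) * b + a, pr_mul v w a b⟩
  inv_mem' := by
    rintro _ ⟨v, hv, a, rfl⟩
    exact ⟨v⁻¹, inv_mem hv, -((v⁻¹ : (ZMod n)ˣ) * a), pr_inv v a⟩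

/-- The translation subgroup. -/
noncomputable def Ns1 (n : ℕ) [NeZero n] : Subgroup (Equiv.Perm (Fin n)) where
  carrier := {σ | ∃ a : ZMod n, σ = pr 1 a}
  one_mem' := ⟨0, pr_one.symm⟩
  mul_mem' := by
    rintro _ _ ⟨a, rfl⟩ ⟨b, rfl⟩
    refine ⟨b + a, ?_⟩
    rw [pr_mul]
    simp
  inv_mem' := by
    rintro _ ⟨a, rfl⟩
    refine ⟨-((1⁻¹ : (ZMod n)ˣ) * a), ?_⟩
    rw [pr_inv]
    simp

/-- The non-transitive normal subgroup. -/
noncomputable def Ns2 (u : (ZMod n)ˣ) (p : ℕ) (h : p ∣ n) :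
    Subgroup (Equiv.Perm (Fin n)) where
  carrier := {σ | ∃ v ∈ Subgroup.zpowers u, ∃ a : ZMod n,
    ZMod.castHom h (ZMod p) a = 0 ∧ σ = pr v a}
  one_mem' := ⟨1, one_mem _, 0, by simp, pr_one.symm⟩
  mul_mem' := by
    rintro _ _ ⟨v, hv, a, ha, rfl⟩ ⟨w, hw, b, hb, rfl⟩
    refine ⟨v * w, mul_mem hv hw, (v : ZMod n) * b + a, ?_, pr_mul v w a b⟩
    rw [map_add, map_mul, ha, hb, mul_zero, add_zero]
  inv_mem' := by
    rintro _ ⟨v, hv, a, ha, rfl⟩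
    refine ⟨v⁻¹, inv_mem hv, -((v⁻¹ : (ZMod n)ˣ) * a), ?_, pr_inv v a⟩
    rw [map_neg, map_mul, ha, mul_zero, neg_zero]

lemma pr_inj1 {v w : (ZMod n)ˣ} {a b : ZMod n} (h : pr v a = pr w b) : a = b := by
  have h0 := congrArg (fun σ : Equiv.Perm (Fin n) => (ee n).symm (σ (ee n 0))) h
  simpa [pr_apply] using h0

lemma pr_inj2 {v w : (ZMod n)ˣ} {a b : ZMod n} (h : pr v a = pr w b) : v = w := by
  have hab : a = b := pr_inj1 h
  have h1 := congrArg (fun σ : Equiv.Perm (Fin n) => (ee n).symm (σ (ee n 1))) h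
  simp only [pr_apply, Equiv.symm_apply_apply, mul_one] at h1
  ext
  subst hab
  exact add_right_cancel h1

/-- The multiplier homomorphism from `Gs u` to the units. -/
noncomputable def theta (u : (ZMod n)ˣ) : Gs u →* (ZMod n)ˣ where
  toFun g := by
    refine ⟨mlt (g : Equiv.Perm (Fin n)), mlt ((g⁻¹ : Gs u) : Equiv.Perm (Fin n)), ?_, ?_⟩
    · obtain ⟨v, hv, a, hva⟩ := g.2
      have hg : (g : Equiv.Perm (Fin n)) = pr v a := hva
      have hginv : ((g⁻¹ : Gs u) : Equiv.Perm (Fin n)) = pr v⁻¹ (-((v⁻¹ : (ZMod n)ˣ) * a)) := by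
        rw [← pr_inv, ← hg]; rfl
      rw [hg, hginv, mlt_pr, mlt_pr]
      exact v.mul_inv
    · obtain ⟨v, hv, a, hva⟩ := g.2
      have hg : (g : Equiv.Perm (Fin n)) = pr v a := hva
      have hginv : ((g⁻¹ : Gs u) : Equiv.Perm (Fin n)) = pr v⁻¹ (-((v⁻¹ : (ZMod n)ˣ) * a)) := by
        rw [← pr_inv, ← hg]; rfl
      rw [hg, hginv, mlt_pr, mlt_pr]
      exact v.inv_mul
  map_one' := by
    ext
    simp only [Units.val_one]
    show mlt ((1 : Gs u) : Equiv.Perm (Fin n)) = 1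
    rw [show ((1 : Gs u) : Equiv.Perm (Fin n)) = pr 1 0 from pr_one.symm, mlt_pr, Units.val_one]
  map_mul' g h := by
    ext
    show mlt ((g * h : Gs u) : Equiv.Perm (Fin n))
      = mlt (g : Equiv.Perm (Fin n)) * mlt (h : Equiv.Perm (Fin n))
    obtain ⟨v, hv, a, hva⟩ := g.2
    obtain ⟨w, hw, b, hwb⟩ := h.2
    have hg : (g : Equiv.Perm (Fin n)) = pr v a := hva
    have hh : (h : Equiv.Perm (Fin n)) = pr w b := hwb
    have : ((g * h : Gs u) : Equiv.Perm (Fin n)) = pr v a * pr w b := by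
      rw [← hg, ← hh]; rfl
    rw [this, pr_mul, mlt_pr, hg, hh, mlt_pr, mlt_pr, Units.val_mul]

lemma cast_of_mem_zpowers {p : ℕ} (h : p ∣ n) (u : (ZMod n)ˣ)
    (hu : ZMod.castHom h (ZMod p) (u : ZMod n) = 1)
    {v : (ZMod n)ˣ} (hv : v ∈ Subgroup.zpowers u) :
    ZMod.castHom h (ZMod p) (v : ZMod n) = 1 := by
  obtain ⟨k, rfl⟩ := hv
  have := congrArg (fun x : (ZMod p)ˣ => (x : ZMod p))
    (map_zpow (Units.map (ZMod.castHom h (ZMod p)).toMonoidHom) u k)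
  calc ZMod.castHom h (ZMod p) ((u ^ k : (ZMod n)ˣ) : ZMod n)
      = ((Units.map (ZMod.castHom h (ZMod p)).toMonoidHom (u ^ k) : (ZMod p)ˣ) : ZMod p) := rfl
    _ = (((Units.map (ZMod.castHom h (ZMod p)).toMonoidHom u) ^ k : (ZMod p)ˣ) : ZMod p) := this
    _ = 1 := by
        have hu' : Units.map (ZMod.castHom h (ZMod p)).toMonoidHom u = 1 := by
          ext; simpa using hu
        rw [hu']; simp

/-- The translation-mod-p homomorphism. -/
noncomputable def psi (u : (ZMod n)ˣ) (p : ℕ) (h : p ∣ n)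
    (hu : ZMod.castHom h (ZMod p) (u : ZMod n) = 1) :
    Gs u →* Multiplicative (ZMod p) where
  toFun g := Multiplicative.ofAdd (ZMod.castHom h (ZMod p) (tsl (g : Equiv.Perm (Fin n))))
  map_one' := by
    have h1 : ((1 : Gs u) : Equiv.Perm (Fin n)) = pr 1 0 := pr_one.symm
    simp only [h1, tsl_pr, map_zero, ofAdd_zero]
  map_mul' g h' := by
    obtain ⟨v, hv, a, hva⟩ := g.2
    obtain ⟨w, hw, b, hwb⟩ := h'.2
    have hg : (g : Equiv.Perm (Fin n)) = pr v a := hva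
    have hh : (h' : Equiv.Perm (Fin n)) = pr w b := hwb
    have hmul : ((g * h' : Gs u) : Equiv.Perm (Fin n)) = pr (v * w) ((v : ZMod n) * b + a) := by
      show (g : Equiv.Perm (Fin n)) * (h' : Equiv.Perm (Fin n)) = _
      rw [hg, hh, pr_mul]
    simp only [hmul, tsl_pr, hg, hh]
    rw [← ofAdd_add]
    congr 1
    rw [map_add, map_mul, cast_of_mem_zpowers h u hu hv, one_mul, add_comm]

end Stmt1Aux

open Stmt1Aux in
theorem stmt_1 (n p : ℕ) (hn : 0 < n) (hp : p.Prime) (hpn : p ∣ n)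
    (hpphi : p ∣ Nat.totient n) :
    ∃ G N₁ N₂ : Subgroup (Equiv.Perm (Fin n)),
      (∀ a b : Fin n, ∃ σ ∈ G, σ a = b) ∧
      N₁ ≤ G ∧ N₂ ≤ G ∧
      (∀ g ∈ G, ∀ x ∈ N₁, g * x * g⁻¹ ∈ N₁) ∧
      (∀ g ∈ G, ∀ x ∈ N₂, g * x * g⁻¹ ∈ N₂) ∧
      N₁.relIndex G = p ∧ N₂.relIndex G = p ∧
      (∀ a b : Fin n, ∃ σ ∈ N₁, σ a = b) ∧
      ¬ (∀ a b : Fin n, ∃ σ ∈ N₂, σ a = b) := by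
  haveI : NeZero n := ⟨hn.ne'⟩
  haveI : Fact p.Prime := ⟨hp⟩
  -- find a unit of order p
  obtain ⟨u, hu⟩ : ∃ u : (ZMod n)ˣ, orderOf u = p := by
    apply exists_prime_orderOf_dvd_card p
    rwa [ZMod.card_units_eq_totient]
  -- u is ≡ 1 mod p
  have hu1 : ZMod.castHom hpn (ZMod p) (u : ZMod n) = 1 := by
    set w : (ZMod p)ˣ := Units.map (ZMod.castHom hpn (ZMod p)).toMonoidHom u with hw
    have h1 : orderOf w ∣ p := by
      have h0 : orderOf w ∣ orderOf u :=
        orderOf_map_dvd (Units.map (ZMod.castHom hpn (ZMod p)).toMonoidHom) u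
      rwa [hu] at h0
    have h2 : orderOf w ∣ p - 1 := by
      have := orderOf_dvd_card (x := w)
      rwa [ZMod.card_units_eq_totient, Nat.totient_prime hp] at this
    have hw1 : w = 1 := by
      apply orderOf_eq_one_iff.mp
      rcases (hp.eq_one_or_self_of_dvd _ h1) with h | h
      · exact h
      · exfalso
        rw [h] at h2
        have h3 : 0 < p - 1 := by have := hp.two_le; omega
        have := Nat.le_of_dvd h3 h2
        omega
    have := congrArg (fun x : (ZMod p)ˣ => (x : ZMod p)) hw1
    simpa [hw] using this
  -- basic inclusions
  have hN1G : Ns1 n ≤ Gs u := by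
    rintro σ ⟨a, rfl⟩
    exact ⟨1, one_mem _, a, rfl⟩
  have hN2G : Ns2 u p hpn ≤ Gs u := by
    rintro σ ⟨v, hv, a, _, rfl⟩
    exact ⟨v, hv, a, rfl⟩
  -- transitivity of N₁
  have htrans1 : ∀ a b : Fin n, ∃ σ ∈ Ns1 n, σ a = b := by
    intro a b
    refine ⟨pr 1 ((ee n).symm b - (ee n).symm a), ⟨_, rfl⟩, ?_⟩
    conv_lhs => rw [show a = ee n ((ee n).symm a) from (Equiv.apply_symm_apply _ _).symm]
    rw [pr_apply]
    simp
  -- kernels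
  have hker1 : (Ns1 n).subgroupOf (Gs u) = (theta u).ker := by
    ext g
    simp only [Subgroup.mem_subgroupOf, MonoidHom.mem_ker]
    constructor
    · rintro ⟨a, hga⟩
      apply Units.ext
      show mlt (g : Equiv.Perm (Fin n)) = 1
      rw [hga, mlt_pr, Units.val_one]
    · intro hg1
      obtain ⟨v, hv, a, hva⟩ := g.2
      have hval : mlt (g : Equiv.Perm (Fin n)) = 1 := congrArg Units.val hg1
      rw [hva, mlt_pr] at hval
      have hv1 : v = 1 := Units.ext hval
      exact ⟨a, by rw [hva, hv1]⟩
  have hker2 : (Ns2 u p hpn).subgroupOf (Gs u) = (psi u p hpn hu1).ker := by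
    ext g
    simp only [Subgroup.mem_subgroupOf, MonoidHom.mem_ker]
    constructor
    · rintro ⟨v, hv, a, ha, hva⟩
      show Multiplicative.ofAdd (ZMod.castHom hpn (ZMod p) (tsl (g : Equiv.Perm (Fin n)))) = 1
      rw [hva, tsl_pr, ha, ofAdd_zero]
    · intro hg1
      obtain ⟨v, hv, a, hva⟩ := g.2
      have hval : ZMod.castHom hpn (ZMod p) (tsl (g : Equiv.Perm (Fin n))) = 0 := by
        have := congrArg Multiplicative.toAdd hg1
        exact this
      rw [hva, tsl_pr] at hval
      exact ⟨v, hv, a, hval, hva⟩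
  refine ⟨Gs u, Ns1 n, Ns2 u p hpn, ?_, hN1G, hN2G, ?_, ?_, ?_, ?_, ?_, ?_⟩
  · -- transitivity of G
    intro a b
    obtain ⟨σ, hσ, hab⟩ := htrans1 a b
    exact ⟨σ, hN1G hσ, hab⟩
  · -- N₁ normal
    intro g hg x hx
    have hxG : x ∈ Gs u := hN1G hx
    have hx' : (⟨x, hxG⟩ : Gs u) ∈ (theta u).ker := by
      rw [← hker1]
      exact Subgroup.mem_subgroupOf.mpr hx
    have hc : (⟨g, hg⟩ : Gs u) * ⟨x, hxG⟩ * (⟨g, hg⟩ : Gs u)⁻¹ ∈ (theta u).ker :=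
      (theta u).normal_ker.conj_mem _ hx' _
    rw [← hker1] at hc
    exact Subgroup.mem_subgroupOf.mp hc
  · -- N₂ normal
    intro g hg x hx
    have hxG : x ∈ Gs u := hN2G hx
    have hx' : (⟨x, hxG⟩ : Gs u) ∈ (psi u p hpn hu1).ker := by
      rw [← hker2]
      exact Subgroup.mem_subgroupOf.mpr hx
    have hc : (⟨g, hg⟩ : Gs u) * ⟨x, hxG⟩ * (⟨g, hg⟩ : Gs u)⁻¹ ∈ (psi u p hpn hu1).ker :=
      (psi u p hpn hu1).normal_ker.conj_mem _ hx' _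
    rw [← hker2] at hc
    exact Subgroup.mem_subgroupOf.mp hc
  · -- relindex N₁
    show ((Ns1 n).subgroupOf (Gs u)).index = p
    rw [hker1, Subgroup.index_ker]
    have hrange : (theta u).range = Subgroup.zpowers u := by
      ext v
      constructor
      · rintro ⟨g, rfl⟩
        obtain ⟨w, hw, a, hwa⟩ := g.2
        have hval : mlt (g : Equiv.Perm (Fin n)) = w := by rw [hwa, mlt_pr]
        have : theta u g = w := Units.ext hval
        rw [this]
        exact hw
      · intro hv
        refine ⟨⟨pr v 0, ⟨v, hv, 0, rfl⟩⟩, Units.ext ?_⟩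
        show mlt (pr v 0) = (v : ZMod n)
        rw [mlt_pr]
    rw [hrange, Nat.card_zpowers, hu]
  · -- relindex N₂
    show ((Ns2 u p hpn).subgroupOf (Gs u)).index = p
    rw [hker2, Subgroup.index_ker]
    have hsurj : Function.Surjective (psi u p hpn hu1) := by
      intro c
      refine ⟨⟨pr 1 (((Multiplicative.toAdd c).val : ℕ) : ZMod n), ⟨1, one_mem _, _, rfl⟩⟩, ?_⟩
      show Multiplicative.ofAdd (ZMod.castHom hpn (ZMod p)
        (tsl (pr 1 ((((Multiplicative.toAdd c).val : ℕ) : ZMod n))))) = c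
      rw [tsl_pr, map_natCast]
      rw [ZMod.natCast_rightInverse (Multiplicative.toAdd c)]
      rfl
    rw [MonoidHom.range_eq_top_of_surjective _ hsurj]
    have hcard : Nat.card (⊤ : Subgroup (Multiplicative (ZMod p))) = Nat.card (ZMod p) :=
      Nat.card_congr (Subgroup.topEquiv.toEquiv.trans Multiplicative.toAdd)
    rw [hcard, Nat.card_zmod]
  · exact htrans1
  · -- N₂ not transitive
    intro h
    obtain ⟨σ, hσ, hval⟩ := h (ee n 0) (ee n 1)
    obtain ⟨v, hv, a, ha, rfl⟩ := hσ
    rw [pr_apply] at hval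
    have h1 : (v : ZMod n) * 0 + a = 1 := (ee n).injective hval
    have ha1 : a = 1 := by simpa using h1
    rw [ha1, map_one] at ha
    exact one_ne_zero ha
end

section
/- Let q be prime and let A be a transitive simple subgroup of S_q. Then the quotient N_{S_q}(A)/A of the normalizer of A in S_q by A is cyclic of order dividing q−1. -/
open Subgroup Equiv

theorem stmt_4 (q : ℕ) (hq : q.Prime) (A : Subgroup (Equiv.Perm (Fin q)))
    (hA : ∀ a b : Fin q, ∃ σ ∈ A, σ a = b)
    (hsimple : IsSimpleGroup A) :
    IsCyclic (↥(Subgroup.normalizer (A : Set (Equiv.Perm (Fin q)))) ⧸ A.subgroupOf (Subgroup.normalizer (A : Set (Equiv.Perm (Fin q))))) ∧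
      Nat.card (↥(Subgroup.normalizer (A : Set (Equiv.Perm (Fin q)))) ⧸ A.subgroupOf (Subgroup.normalizer (A : Set (Equiv.Perm (Fin q))))) ∣ q - 1 := by
  classical
  have hq' : Fact q.Prime := ⟨hq⟩
  -- q divides the order of A
  set x₀ : Fin q := ⟨0, hq.pos⟩ with hx₀
  have horb : MulAction.orbit A x₀ = Set.univ := by
    ext b
    simp only [Set.mem_univ, iff_true, MulAction.mem_orbit_iff]
    obtain ⟨σ, hσ, hσb⟩ := hA x₀ b
    exact ⟨⟨σ, hσ⟩, hσb⟩
  have hqA : q ∣ Nat.card A := by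
    have h1 : Nat.card (MulAction.orbit A x₀) = q := by
      rw [horb, Nat.card_coe_set_eq, Set.ncard_univ, Nat.card_eq_fintype_card,
        Fintype.card_fin]
    have h2 := Nat.card_congr (MulAction.orbitEquivQuotientStabilizer A x₀)
    rw [h1] at h2
    have h3 : Nat.card (A ⧸ MulAction.stabilizer A x₀) ∣ Nat.card A := by
      rw [← Subgroup.index_eq_card]
      exact Subgroup.index_dvd_card _
    rwa [← h2] at h3
  -- Cauchy: an element of order q
  obtain ⟨g, hg⟩ : ∃ g : A, orderOf g = q := by
    have : q ∣ Fintype.card A := by rwa [← Nat.card_eq_fintype_card]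
    exact exists_prime_orderOf_dvd_card q this
  set σ : Equiv.Perm (Fin q) := (g : Equiv.Perm (Fin q)) with hσdef
  have hσord : orderOf σ = q := by rw [Subgroup.orderOf_coe, hg]
  have hσA : σ ∈ A := g.2
  -- σ is a cycle moving everything
  have hcyc : σ.IsCycle := Equiv.Perm.isCycle_of_prime_order'' (by simpa using hq)
    (by simpa using hσord)
  have hsupp : ∀ x : Fin q, σ x ≠ x := by
    have hcard : σ.support.card = q := by
      rw [← hcyc.orderOf, hσord]
    have : σ.support = Finset.univ :=
      Finset.eq_univ_of_card _ (by simpa using hcard)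
    intro x
    have : x ∈ σ.support := this ▸ Finset.mem_univ x
    exact Equiv.Perm.mem_support.mp this
  have htrans : ∀ a b : Fin q, ∃ k : ℤ, (σ ^ k) a = b := by
    obtain ⟨x, -, hx⟩ := hcyc
    intro a b
    exact ((hx (hsupp a)).symm.trans (hx (hsupp b)))
  -- the centralizer of ⟨σ⟩ is ⟨σ⟩ itself
  have hcent : Subgroup.centralizer (Subgroup.zpowers σ : Set (Equiv.Perm (Fin q))) ≤
      Subgroup.zpowers σ := by
    intro τ hτ
    rw [Subgroup.mem_centralizer_iff] at hτ
    have hcom : σ * τ = τ * σ := hτ σ (Subgroup.mem_zpowers σ)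
    obtain ⟨k, hk⟩ := htrans x₀ (τ x₀)
    refine ⟨k, ?_⟩
    refine Equiv.ext fun x => ?_
    obtain ⟨m, hm⟩ := htrans x₀ x
    have hcomC : Commute σ τ := hcom
    have hcom' : σ ^ m * τ = τ * σ ^ m := (hcomC.zpow_left m).eq
    calc (σ ^ k) x = (σ ^ k) ((σ ^ m) x₀) := by rw [hm]
      _ = (σ ^ m) ((σ ^ k) x₀) := by
          rw [← Equiv.Perm.mul_apply, ← Equiv.Perm.mul_apply, ← zpow_add, ← zpow_add, add_comm]
      _ = (σ ^ m) (τ x₀) := by rw [hk]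
      _ = τ ((σ ^ m) x₀) := by
          rw [← Equiv.Perm.mul_apply, ← Equiv.Perm.mul_apply, hcom']
      _ = τ x := by rw [hm]
  set Q : Subgroup (Equiv.Perm (Fin q)) := Subgroup.zpowers σ with hQdef
  have hQA : Q ≤ A := (Subgroup.zpowers_le).mpr hσA
  have hcardQ : Nat.card Q = q := by rw [Nat.card_zpowers, hσord]
  set N : Subgroup (Equiv.Perm (Fin q)) := Subgroup.normalizer (A : Set (Equiv.Perm (Fin q))) with hNdef
  have hAN : A ≤ N := Subgroup.le_normalizer
  have hQN : Q ≤ N := hQA.trans hAN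
  set A' : Subgroup N := A.subgroupOf N with hA'def
  set Q' : Subgroup N := Q.subgroupOf N with hQ'def
  have hA'norm : A'.Normal := Subgroup.normal_in_normalizer
  have hcardQ' : Nat.card Q' = q :=
    (Nat.card_congr (Subgroup.subgroupOfEquivOfLe hQN).toEquiv).trans hcardQ
  -- q-adic valuation of |N| is 1
  have hq2 : ¬ (q ^ 2 ∣ Nat.card N) := by
    intro h
    have hNdvd : Nat.card N ∣ Nat.factorial q := by
      have h0 : Nat.card N ∣ Nat.card (Equiv.Perm (Fin q)) := Subgroup.card_subgroup_dvd_card N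
      simpa [Nat.card_eq_fintype_card, Fintype.card_perm, Fintype.card_fin] using h0
    have h2 : q ^ 2 ∣ Nat.factorial q := h.trans hNdvd
    have hfac : Nat.factorial q = q * Nat.factorial (q - 1) :=
      (Nat.mul_factorial_pred hq.ne_zero).symm
    rw [hfac, pow_two] at h2
    have : q ∣ Nat.factorial (q - 1) := (mul_dvd_mul_iff_left (by exact_mod_cast hq.pos.ne' : q ≠ 0)).mp h2
    have := (Nat.Prime.dvd_factorial hq).mp this
    have := hq.two_le
    omega
  have hqN : q ∣ Nat.card N := by
    have := Subgroup.card_subgroup_dvd_card Q'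
    rwa [hcardQ'] at this
  have hNpos : Nat.card N ≠ 0 := Nat.card_pos.ne'
  have hfact : (Nat.card N).factorization q = 1 := by
    have h1 : 1 ≤ (Nat.card N).factorization q := by
      rw [← Nat.Prime.pow_dvd_iff_le_factorization hq hNpos]
      simpa using hqN
    have h2 : ¬ 2 ≤ (Nat.card N).factorization q := by
      rw [← Nat.Prime.pow_dvd_iff_le_factorization hq hNpos]
      exact hq2
    omega
  -- Q' is a Sylow q-subgroup of N
  set P : Sylow q N := Sylow.ofCard Q' (by rw [hfact, pow_one, hcardQ'])
  have hPQ' : (P : Subgroup N) = Q' := rfl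
  have hPA : (P : Subgroup N) ≤ A' := by
    rw [hPQ']
    intro x hx
    exact hQA hx
  -- Frattini argument
  have hFrat : Subgroup.normalizer ((P : Subgroup N) : Set N) ⊔ A' = ⊤ :=
    Sylow.normalizer_sup_eq_top' P hPA
  set H : Subgroup N := Subgroup.normalizer (Q' : Set N) with hHdef
  have hFrat' : H ⊔ A' = ⊤ := hFrat
  -- second isomorphism theorem
  have e2 := QuotientGroup.quotientInfEquivProdNormalQuotient H A'
  rw [hFrat'] at e2
  have e3 : ((⊤ : Subgroup N) ⧸ A'.subgroupOf ⊤) ≃* (N ⧸ A') := by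
    refine QuotientGroup.congr (A'.subgroupOf ⊤) A' Subgroup.topEquiv ?_
    ext x
    simp [Subgroup.mem_map, Subgroup.mem_subgroupOf]
  have E : (H ⧸ A'.subgroupOf H) ≃* (N ⧸ A') := e2.trans e3
  -- conjugation action on Q'
  set φ : H →* MulAut Q' := Q'.normalizerMonoidHom with hφdef
  have hker : φ.ker = (Subgroup.centralizer (Q' : Set N)).subgroupOf H :=
    Subgroup.normalizerMonoidHom_ker Q'
  have hker_le : φ.ker ≤ A'.subgroupOf H := by
    intro x hx
    rw [hker, Subgroup.mem_subgroupOf, Subgroup.mem_centralizer_iff] at hx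
    rw [Subgroup.mem_subgroupOf, Subgroup.mem_subgroupOf]
    have hxcent : ((x : N) : Equiv.Perm (Fin q)) ∈ Subgroup.centralizer (Q : Set (Equiv.Perm (Fin q))) := by
      rw [Subgroup.mem_centralizer_iff]
      intro g hg
      have hgN : g ∈ N := hQN hg
      have : (⟨g, hgN⟩ : N) ∈ Q' := by
        rw [hQ'def, Subgroup.mem_subgroupOf]; exact hg
      have := hx ⟨g, hgN⟩ this
      exact congrArg Subtype.val this
    exact hQA (hcent hxcent)
  -- Aut Q' is cyclic of order q - 1
  have hQ'cyc : IsCyclic Q' := isCyclic_of_prime_card hcardQ'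
  have hautcard : Nat.card (MulAut Q') = q - 1 := by
    rw [IsCyclic.card_mulAut, hcardQ', Nat.totient_prime hq]
  have hautcyc : IsCyclic (MulAut Q') := by
    have eq1 : Q' ≃* Multiplicative (ZMod q) := (hcardQ' ▸ zmodCyclicMulEquiv hQ'cyc).symm
    have e4 : MulAut Q' ≃* MulAut (Multiplicative (ZMod q)) := MulAut.congr eq1
    have e5 : MulAut (Multiplicative (ZMod q)) ≃* Multiplicative (AddAut (ZMod q)) :=
      MulAutMultiplicative (ZMod q)
    have e6 : Multiplicative (AddAut (ZMod q)) ≃* (ZMod q)ˣ := (ZMod.AddAutEquivUnits q).toMultiplicative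
    exact isCyclic_of_surjective (e4.trans (e5.trans e6)).symm (e4.trans (e5.trans e6)).symm.surjective
  -- H / ker φ is cyclic of order dividing q - 1
  have hkq : IsCyclic (H ⧸ φ.ker) :=
    isCyclic_of_surjective (QuotientGroup.quotientKerEquivRange φ).symm
      (QuotientGroup.quotientKerEquivRange φ).symm.surjective
  have hkcard : Nat.card (H ⧸ φ.ker) ∣ q - 1 := by
    rw [Nat.card_congr (QuotientGroup.quotientKerEquivRange φ).toEquiv, ← hautcard]
    exact Subgroup.card_subgroup_dvd_card φ.range
  -- project to H / (A' ⊓ H)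
  set f : (H ⧸ φ.ker) →* (H ⧸ A'.subgroupOf H) :=
    QuotientGroup.map _ _ (MonoidHom.id H) (by simpa using hker_le) with hfdef
  have hfsurj : Function.Surjective f := by
    rintro ⟨y⟩
    exact ⟨QuotientGroup.mk y, rfl⟩
  have hc1 : IsCyclic (H ⧸ A'.subgroupOf H) := isCyclic_of_surjective f hfsurj
  have hd1 : Nat.card (H ⧸ A'.subgroupOf H) ∣ q - 1 :=
    (Subgroup.card_dvd_of_surjective f hfsurj).trans hkcard
  constructor
  · exact isCyclic_of_surjective E E.surjective
  · rw [← Nat.card_congr E.toEquiv]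
    exact hd1
end

section
/- Let p < q be primes with p not dividing q−1. If A is a transitive subgroup of S_q and B is a normal subgroup of A with p dividing the index [A:B], then B is trivial. -/
open Subgroup Equiv MulAction
open scoped Pointwise

lemma aux_sq_not_dvd_factorial {q : ℕ} (hq : q.Prime) : ¬ q ^ 2 ∣ q.factorial := by
  intro hcon
  obtain ⟨m, rfl⟩ : ∃ m, q = m + 1 := ⟨q - 1, (Nat.succ_pred_eq_of_pos hq.pos).symm⟩
  rw [Nat.factorial_succ, pow_two] at hcon
  have h2 : (m + 1) ∣ m.factorial :=
    (Nat.mul_dvd_mul_iff_left (Nat.succ_pos m)).mp hcon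
  have h3 : m + 1 ≤ m := (Nat.Prime.dvd_factorial hq).mp h2
  omega

/-- A permutation commuting with a full-support cycle is a power of it. -/
lemma aux_mem_zpowers_of_commute {n : ℕ} {σ g : Equiv.Perm (Fin n)} (hσ : σ.IsCycle)
    (hsupp : σ.support = Finset.univ) (h : Commute g σ) :
    g ∈ Subgroup.zpowers σ := by
  obtain ⟨hc', hmem⟩ := hσ.commute_iff.mp h
  have hg : Equiv.Perm.ofSubtype (g.subtypePerm hc') = g := by
    ext x
    rw [Equiv.Perm.ofSubtype_subtypePerm_of_mem hc' (by simp [hsupp])]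
  rwa [hg] at hmem

theorem stmt_9 (p q : ℕ) (hp : p.Prime) (hq : q.Prime) (hpq : p < q)
    (hnd : ¬ p ∣ (q - 1)) (A B : Subgroup (Equiv.Perm (Fin q)))
    (hA : ∀ a b : Fin q, ∃ σ ∈ A, σ a = b)
    (hBA : B ≤ A)
    (hnorm : ∀ g ∈ A, ∀ x ∈ B, g * x * g⁻¹ ∈ B)
    (hdvd : p ∣ B.relIndex A) :
    B = ⊥ := by
  classical
  by_contra hBbot
  haveI : Fact q.Prime := ⟨hq⟩
  set G := Equiv.Perm (Fin q)
  -- B is nontrivial: get b moving some point x₀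
  obtain ⟨b, hbB, hb1⟩ := (Subgroup.bot_or_exists_ne_one B).resolve_left hBbot
  obtain ⟨x₀, hx₀⟩ : ∃ x : Fin q, b x ≠ x := by
    by_contra hcon
    push_neg at hcon
    exact hb1 (Equiv.ext fun x => hcon x)
  -- work inside A
  set B' : Subgroup A := B.subgroupOf A with hB'
  haveI hB'norm : B'.Normal := by
    constructor
    intro n hn g
    simp only [hB', Subgroup.mem_subgroupOf] at hn ⊢
    exact hnorm g g.2 n hn
  apply hnd
  -- A acts transitively on Fin q
  haveI : IsPretransitive A (Fin q) := by
    constructor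
    intro a c
    obtain ⟨σ, hσ, hac⟩ := hA a c
    exact ⟨⟨σ, hσ⟩, hac⟩
  have hcardq : Nat.card (Fin q) = q := by simp
  -- the stabilizer of x₀ in A has index q
  set St : Subgroup A := MulAction.stabilizer A x₀ with hSt
  have hStindex : St.index = q := by
    rw [hSt, MulAction.index_stabilizer_of_transitive, hcardq]
  -- B' ⊔ St = ⊤
  have hsup : B' ⊔ St = ⊤ := by
    have hmul : St.relIndex (B' ⊔ St) * (B' ⊔ St).index = q := by
      rw [Subgroup.relIndex_mul_index le_sup_right, hStindex]
    have hdvd' : (B' ⊔ St).index ∣ q := Dvd.intro_left _ hmul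
    rcases (hq.eq_one_or_self_of_dvd _ hdvd') with hone | hqq
    · exact Subgroup.index_eq_one.mp hone
    · exfalso
      rw [hqq] at hmul
      have hr1 : St.relIndex (B' ⊔ St) = 1 := by
        have hq0 : 0 < q := hq.pos
        nlinarith [Nat.le_of_dvd hq0 (Dvd.intro _ hmul), hmul]
      have hle : B' ≤ St := le_trans le_sup_left (Subgroup.relIndex_eq_one.mp hr1)
      have : (⟨b, hBA hbB⟩ : A) ∈ St := hle (by simpa [hB', Subgroup.mem_subgroupOf] using hbB)
      exact hx₀ this
  -- hence B' is transitive, so q divides card B'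
  have horb : MulAction.orbit B' x₀ = Set.univ := by
    apply Set.eq_univ_of_forall
    intro y
    obtain ⟨a, ha⟩ := MulAction.exists_smul_eq A x₀ y
    have haBSt : (a : A) ∈ (B' : Set A) * (St : Set A) := by
      rw [← Subgroup.normal_mul B', hsup]
      trivial
    obtain ⟨b₁, hb₁, s, hs, rfl⟩ := haBSt
    have hsx : s • x₀ = x₀ := hs
    refine ⟨⟨b₁, hb₁⟩, ?_⟩
    rw [← ha, mul_smul, hsx]
    rfl
  have hqB' : q ∣ Nat.card B' := by
    have : (MulAction.stabilizer B' x₀).index = q := by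
      rw [MulAction.index_stabilizer, horb, Set.ncard_univ, hcardq]
    have h2 := Subgroup.index_dvd_card (MulAction.stabilizer B' x₀)
    rwa [this] at h2
  -- Cauchy: an element of order q in B'
  obtain ⟨β, hβ⟩ := exists_prime_orderOf_dvd_card' (G := B') q hqB'
  set σA : A := (β : A) with hσAdef
  set σ : G := (σA : G) with hσdef
  have hσAB' : σA ∈ B' := β.2
  have hordA : orderOf σA = q :=
    (orderOf_injective B'.subtype Subtype.coe_injective β).trans hβ
  have hord : orderOf σ = q :=
    (orderOf_injective A.subtype Subtype.coe_injective σA).trans hordA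
  have hσcycle : σ.IsCycle :=
    Equiv.Perm.isCycle_of_prime_order'' (by simpa using hq) (by simpa using hord)
  have hsupp : σ.support = Finset.univ := by
    apply Finset.eq_univ_of_card
    rw [← hσcycle.orderOf, hord, Fintype.card_fin]
  -- the Sylow q-subgroup generated by σ
  set Q : Subgroup A := Subgroup.zpowers σA with hQdef
  have hQcard : Nat.card Q = q := by rw [hQdef, Nat.card_zpowers, hordA]
  have hQB' : Q ≤ B' := by rw [hQdef, Subgroup.zpowers_le]; exact hσAB'
  -- the centralizer of Q in A is Q itself
  have hcent : Subgroup.centralizer (Q : Set A) = Q := by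
    apply le_antisymm
    · intro z hz
      have h1 : σA * z = z * σA :=
        (Subgroup.mem_centralizer_iff.mp hz) σA (Subgroup.mem_zpowers σA)
      have hcomm : Commute (z : G) σ := by
        have h2 : (↑(σA * z) : G) = ↑(z * σA) := congrArg Subtype.val h1
        simpa [Commute, SemiconjBy, eq_comm] using h2
      obtain ⟨k, hk⟩ := Subgroup.mem_zpowers_iff.mp
        (aux_mem_zpowers_of_commute hσcycle hsupp hcomm)
      rw [hQdef, Subgroup.mem_zpowers_iff]
      exact ⟨k, Subtype.ext (by rw [← hk]; simp [hσdef])⟩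
    · intro z hz
      rw [Subgroup.mem_centralizer_iff]
      intro g hg
      obtain ⟨m, rfl⟩ := Subgroup.mem_zpowers_iff.mp hz
      obtain ⟨k, rfl⟩ := Subgroup.mem_zpowers_iff.mp hg
      rw [← zpow_add, ← zpow_add, add_comm]
  -- Q is a Sylow q-subgroup of A
  obtain ⟨P, hQP⟩ := (IsPGroup.of_card (p := q) (n := 1) (by rw [hQcard, pow_one])).exists_le_sylow
  have hq2 : ¬ q ^ 2 ∣ q.factorial := aux_sq_not_dvd_factorial hq
  have hPfact : Nat.card (P : Subgroup A) ∣ q.factorial := by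
    have h1 : Nat.card (P : Subgroup A) ∣ Nat.card A := Subgroup.card_subgroup_dvd_card _
    have h2 : Nat.card A ∣ Nat.card G := Subgroup.card_subgroup_dvd_card _
    have h3 : Nat.card G = q.factorial := by
      rw [Nat.card_eq_fintype_card]
      simp [hσdef, G, Fintype.card_perm]
    exact (h1.trans h2).trans (h3 ▸ dvd_refl _)
  have hPcard : Nat.card (P : Subgroup A) = q := by
    obtain ⟨n, hn⟩ := IsPGroup.iff_card.mp P.2
    have hqn : q ∣ q ^ n := by
      have h := Subgroup.card_dvd_of_le hQP
      rwa [hQcard, hn] at h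
    have hn1 : n = 1 := by
      rcases n with _ | _ | n
      · simp at hqn; omega
      · rfl
      · exfalso
        apply hq2
        calc q ^ 2 ∣ q ^ (n + 2) := pow_dvd_pow q (by omega)
        _ ∣ q.factorial := hn ▸ hPfact
    rw [hn, hn1, pow_one]
  have hPQ : (P : Subgroup A) = Q :=
    (Subgroup.eq_of_le_of_card_ge hQP (by rw [hPcard, hQcard])).symm
  -- Frattini argument
  have hfr : (Subgroup.normalizer (Q : Set A)) ⊔ B' = ⊤ := by
    rw [← hPQ]
    exact Sylow.normalizer_sup_eq_top' P (hPQ ▸ hQB')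
  -- index computations
  have h1 : B'.index = B'.relIndex (Subgroup.normalizer (Q : Set A)) := by
    rw [← Subgroup.relIndex_top_right, ← hfr, Subgroup.relIndex_sup_right]
  have h2 : B'.relIndex (Subgroup.normalizer (Q : Set A)) ∣ Q.relIndex (Subgroup.normalizer (Q : Set A)) :=
    Subgroup.relIndex_dvd_of_le_left _ hQB'
  have h3 : Q.relIndex (Subgroup.normalizer (Q : Set A)) = Q.normalizerMonoidHom.ker.index := by
    rw [Subgroup.normalizerMonoidHom_ker, hcent]
    rfl
  haveI : IsCyclic Q := isCyclic_of_prime_card hQcard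
  have h6 : Nat.card (MulAut Q) = q - 1 := by
    rw [IsCyclic.card_mulAut, hQcard, Nat.totient_prime hq]
  have h4 : Q.normalizerMonoidHom.ker.index ∣ q - 1 := by
    rw [Subgroup.index_ker, ← h6]
    exact Subgroup.card_subgroup_dvd_card _
  calc p ∣ B'.index := hdvd
  _ = B'.relIndex (Subgroup.normalizer (Q : Set A)) := h1
  _ ∣ Q.relIndex (Subgroup.normalizer (Q : Set A)) := h2
  _ = Q.normalizerMonoidHom.ker.index := h3
  _ ∣ q - 1 := h4
end

section
/- Let p < q be primes with p not dividing q−1. If A is a transitive subgroup of S_q and B is a normal subgroup of A with p dividing [A:B], then q divides [A:B]. -/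
open Equiv MulAction Subgroup

private lemma orbit_card_dvd {q : ℕ} (H : Subgroup (Equiv.Perm (Fin q))) (x : Fin q) :
    Nat.card (orbit H x) ∣ Nat.card H := by
  classical
  rw [Nat.card_eq_fintype_card, Nat.card_eq_fintype_card]
  exact ⟨_, (card_orbit_mul_card_stabilizer_eq_card_group H x).symm⟩

private lemma card_dvd_of_transitive {q : ℕ} (hq0 : 0 < q) (H : Subgroup (Equiv.Perm (Fin q)))
    (hH : ∀ a b : Fin q, ∃ σ ∈ H, σ a = b) : q ∣ Nat.card H := by
  set x0 : Fin q := ⟨0, hq0⟩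
  have huniv : orbit H x0 = Set.univ := Set.eq_univ_iff_forall.mpr fun y =>
    mem_orbit_iff.mpr (let ⟨σ, hσ, h⟩ := hH x0 y; ⟨⟨σ, hσ⟩, h⟩)
  have hd := orbit_card_dvd H x0
  rwa [huniv, Nat.card_coe_set_eq, Set.ncard_univ, Nat.card_eq_fintype_card,
    Fintype.card_fin] at hd

private lemma orbit_card_ne_one {q : ℕ} {H : Subgroup (Equiv.Perm (Fin q))}
    {σ : Equiv.Perm (Fin q)} (hσ : σ ∈ H) {x : Fin q} (hx : σ x ≠ x) :
    Nat.card (orbit H x) ≠ 1 := by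
  intro h
  rw [Nat.card_coe_set_eq, Set.ncard_eq_one] at h
  obtain ⟨a, ha⟩ := h
  have h1 : x ∈ orbit H x := mem_orbit_self x
  have h2 : σ x ∈ orbit H x := mem_orbit x (⟨σ, hσ⟩ : H)
  rw [ha, Set.mem_singleton_iff] at h1 h2
  exact hx (h2.trans h1.symm)

private lemma trans_of_card_prime {q : ℕ} (hq : q.Prime) (H : Subgroup (Equiv.Perm (Fin q)))
    (hcard : Nat.card H = q) : ∀ a b : Fin q, ∃ σ ∈ H, σ a = b := by
  have hbot : H ≠ ⊥ := by
    intro h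
    rw [h, Subgroup.card_bot] at hcard
    exact hq.one_lt.ne' hcard.symm
  obtain ⟨σ, hσH, hσ1⟩ : ∃ σ ∈ H, σ ≠ 1 := by
    by_contra h
    push_neg at h
    exact hbot (eq_bot_iff.mpr fun x hx => Subgroup.mem_bot.mpr (h x hx))
  obtain ⟨x0, hx0⟩ : ∃ x, σ x ≠ x := by
    by_contra h
    push_neg at h
    exact hσ1 (Equiv.ext h)
  have h1 : Nat.card (orbit H x0) ∣ q := by
    have := orbit_card_dvd H x0
    rwa [hcard] at this
  have hcardorb : Nat.card (orbit H x0) = q :=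
    (hq.eq_one_or_self_of_dvd _ h1).resolve_left (orbit_card_ne_one hσH hx0)
  have huniv : orbit H x0 = Set.univ := by
    apply Set.eq_of_subset_of_ncard_le (Set.subset_univ _)
    rw [Set.ncard_univ, ← Nat.card_coe_set_eq, hcardorb, Nat.card_eq_fintype_card,
      Fintype.card_fin]
  intro a b
  obtain ⟨⟨σ₁, h₁⟩, hx1⟩ := mem_orbit_iff.mp (huniv ▸ Set.mem_univ a)
  obtain ⟨⟨σ₂, h₂⟩, hx2⟩ := mem_orbit_iff.mp (huniv ▸ Set.mem_univ b)
  refine ⟨σ₂ * σ₁⁻¹, mul_mem h₂ (inv_mem h₁), ?_⟩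
  have : σ₁ x0 = a := hx1
  have hb : σ₂ x0 = b := hx2
  rw [Equiv.Perm.mul_apply, ← this, Equiv.Perm.inv_def, Equiv.symm_apply_apply, hb]

private lemma comm_of_card_prime {q : ℕ} (hq : q.Prime) {G : Type*} [Group G] {H : Subgroup G}
    (hcard : Nat.card H = q) {a b : G} (ha : a ∈ H) (hb : b ∈ H) : a * b = b * a := by
  haveI : Fact q.Prime := ⟨hq⟩
  haveI : IsCyclic H := isCyclic_of_prime_card hcard
  letI : CommGroup H := IsCyclic.commGroup
  have := mul_comm (⟨a, ha⟩ : H) (⟨b, hb⟩ : H)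
  exact congrArg Subtype.val this

private lemma centralizer_le_of_card_prime {q : ℕ} (hq : q.Prime)
    (H : Subgroup (Equiv.Perm (Fin q))) (hcard : Nat.card H = q) :
    Subgroup.centralizer (H : Set (Equiv.Perm (Fin q))) ≤ H := by
  intro c hc
  rw [Subgroup.mem_centralizer_iff] at hc
  have htrans := trans_of_card_prime hq H hcard
  have x0 : Fin q := ⟨0, hq.pos⟩
  obtain ⟨σ, hσ, hσx⟩ := htrans x0 (c x0)
  have hext : ∀ z, c z = σ z := by
    intro z
    obtain ⟨τ, hτ, rfl⟩ := htrans x0 z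
    have h1 : τ * c = c * τ := hc τ hτ
    have h2 : σ * τ = τ * σ := comm_of_card_prime hq hcard hσ hτ
    calc c (τ x0) = (c * τ) x0 := rfl
      _ = (τ * c) x0 := by rw [h1]
      _ = τ (c x0) := rfl
      _ = τ (σ x0) := by rw [hσx]
      _ = (τ * σ) x0 := rfl
      _ = (σ * τ) x0 := by rw [h2]
      _ = σ (τ x0) := rfl
  have : c = σ := Equiv.ext hext
  rwa [this]

private lemma orbit_image_eq {q : ℕ} {A B : Subgroup (Equiv.Perm (Fin q))}
    (hnorm : ∀ g ∈ A, ∀ x ∈ B, g * x * g⁻¹ ∈ B) {g : Equiv.Perm (Fin q)} (hg : g ∈ A)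
    (x : Fin q) : (⇑g) '' (orbit B x) = orbit B (g x) := by
  ext w
  constructor
  · rintro ⟨z, hz, rfl⟩
    obtain ⟨τ, rfl⟩ := mem_orbit_iff.mp hz
    refine mem_orbit_iff.mpr ⟨⟨g * ↑τ * g⁻¹, hnorm g hg ↑τ τ.2⟩, ?_⟩
    show (g * ↑τ * g⁻¹) (g x) = g ((↑τ : Equiv.Perm (Fin q)) x)
    simp [Equiv.Perm.mul_apply]
  · rintro ⟨τ, rfl⟩
    have hmem : (g⁻¹ * ↑τ * g : Equiv.Perm (Fin q)) ∈ B := by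
      have := hnorm g⁻¹ (inv_mem hg) ↑τ τ.2
      simpa using this
    have hzmem : (g⁻¹ * ↑τ * g) x ∈ orbit B x := by
      refine mem_orbit_iff.mpr ⟨⟨g⁻¹ * ↑τ * g, hmem⟩, ?_⟩
      rfl
    refine ⟨(g⁻¹ * ↑τ * g) x, hzmem, ?_⟩
    show g ((g⁻¹ * ↑τ * g) x) = (↑τ : Equiv.Perm (Fin q)) (g x)
    simp [Equiv.Perm.mul_apply]

theorem stmt_10 (p q : ℕ) (hp : p.Prime) (hq : q.Prime) (hpq : p < q)
    (hnd : ¬ p ∣ (q - 1)) (A B : Subgroup (Equiv.Perm (Fin q)))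
    (hA : ∀ a b : Fin q, ∃ σ ∈ A, σ a = b)
    (hBA : B ≤ A)
    (hnorm : ∀ g ∈ A, ∀ x ∈ B, g * x * g⁻¹ ∈ B)
    (hdvd : p ∣ B.relIndex A) :
    q ∣ B.relIndex A := by
  classical
  haveI : Fact q.Prime := ⟨hq⟩
  by_cases hB : B = ⊥
  · subst hB
    rw [Subgroup.relIndex_bot_left]
    exact card_dvd_of_transitive hq.pos A hA
  -- main case: derive a contradiction
  exfalso
  -- step 1: q ∣ Nat.card B
  obtain ⟨τ0, hτ0B, hτ01⟩ : ∃ τ ∈ B, τ ≠ 1 := by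
    by_contra h
    push_neg at h
    exact hB (eq_bot_iff.mpr fun x hx => Subgroup.mem_bot.mpr (h x hx))
  obtain ⟨x0, hx0⟩ : ∃ x, τ0 x ≠ x := by
    by_contra h
    push_neg at h
    exact hτ01 (Equiv.ext h)
  set d := Nat.card (orbit B x0) with hd
  have horb : ∀ y : Fin q, Nat.card (orbit B y) = d := by
    intro y
    obtain ⟨g, hg, hgx⟩ := hA x0 y
    rw [← hgx, ← orbit_image_eq hnorm hg, Nat.card_coe_set_eq,
      Set.ncard_image_of_injective _ g.injective, ← Nat.card_coe_set_eq]
  have hcount : q = Nat.card (orbitRel.Quotient B (Fin q)) * d := by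
    haveI : Fintype (orbitRel.Quotient B (Fin q)) := Fintype.ofFinite _
    haveI : ∀ ω : orbitRel.Quotient B (Fin q), Fintype (orbit B ω.out) :=
      fun _ => Fintype.ofFinite _
    calc q = Fintype.card (Fin q) := (Fintype.card_fin q).symm
      _ = Fintype.card (Σ ω : orbitRel.Quotient B (Fin q), orbit B ω.out) :=
          Fintype.card_congr (selfEquivSigmaOrbits B (Fin q))
      _ = ∑ ω : orbitRel.Quotient B (Fin q), Fintype.card (orbit B ω.out) :=
          Fintype.card_sigma
      _ = ∑ _ω : orbitRel.Quotient B (Fin q), d := by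
          refine Finset.sum_congr rfl fun ω _ => ?_
          rw [← Nat.card_eq_fintype_card]
          exact horb _
      _ = Nat.card (orbitRel.Quotient B (Fin q)) * d := by
          rw [Finset.sum_const, smul_eq_mul, Finset.card_univ, Nat.card_eq_fintype_card]
  have hddvd : d ∣ q := Dvd.intro_left _ hcount.symm
  have hdq : d = q :=
    (hq.eq_one_or_self_of_dvd _ hddvd).resolve_left (orbit_card_ne_one hτ0B hx0)
  have hqBd : d ∣ Nat.card B := orbit_card_dvd B x0
  have hqB : q ∣ Nat.card B := by rwa [hdq] at hqBd
  -- step 2: set up inside A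
  set B' := B.subgroupOf A with hB'def
  haveI hBnorm : B'.Normal := by
    constructor
    intro n hn g
    rw [Subgroup.mem_subgroupOf] at hn ⊢
    exact hnorm ↑g g.2 ↑n hn
  have hcardB' : Nat.card B' = Nat.card B :=
    Nat.card_congr (Subgroup.subgroupOfEquivOfLe hBA).toEquiv
  have hqB' : q ∣ Nat.card B' := hcardB' ▸ hqB
  have hq2 : ¬ q ^ 2 ∣ Nat.card B' := by
    intro h
    have h1 : Nat.card B ∣ Nat.card (Equiv.Perm (Fin q)) := Subgroup.card_subgroup_dvd_card B
    have h2 : Nat.card (Equiv.Perm (Fin q)) = Nat.factorial q := by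
      rw [Nat.card_eq_fintype_card, Fintype.card_perm, Fintype.card_fin]
    have h3 : q ^ 2 ∣ Nat.factorial q := dvd_trans (hcardB' ▸ h) (h2 ▸ h1)
    have hq1 : q - 1 + 1 = q := Nat.succ_pred_eq_of_pos hq.pos
    rw [← hq1, Nat.factorial_succ, hq1] at h3
    have h3' : q * q ∣ q * Nat.factorial (q - 1) := by rwa [← pow_two]
    have h4 : q ∣ Nat.factorial (q - 1) := (Nat.mul_dvd_mul_iff_left hq.pos).mp h3'
    have h5 := (Nat.Prime.dvd_factorial hq).mp h4
    have := hq.two_le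
    omega
  have hne : Nat.card B' ≠ 0 := Nat.card_pos.ne'
  have hfact : (Nat.card B').factorization q = 1 := by
    have h1 : 1 ≤ (Nat.card B').factorization q :=
      (Nat.Prime.pow_dvd_iff_le_factorization hq hne).mp (by rw [pow_one]; exact hqB')
    have h2 : ¬ 2 ≤ (Nat.card B').factorization q :=
      fun h => hq2 ((Nat.Prime.pow_dvd_iff_le_factorization hq hne).mpr h)
    omega
  have P : Sylow q B' := Classical.arbitrary _
  set Q' : Subgroup A := Subgroup.map B'.subtype (P : Subgroup B') with hQ'def
  have hcardQ' : Nat.card Q' = q := by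
    have h1 : Nat.card Q' = Nat.card (P : Subgroup B') :=
      (Nat.card_congr (Subgroup.equivMapOfInjective (P : Subgroup B') B'.subtype B'.subtype_injective).toEquiv).symm
    rw [h1, Sylow.card_eq_multiplicity, hfact]
    exact pow_one q
  set QP : Subgroup (Equiv.Perm (Fin q)) := Subgroup.map A.subtype Q' with hQPdef
  have hcardQP : Nat.card QP = q := by
    have h1 : Nat.card QP = Nat.card Q' :=
      (Nat.card_congr (Subgroup.equivMapOfInjective Q' A.subtype A.subtype_injective).toEquiv).symm
    rw [h1, hcardQ']
  -- centralizer of Q' in A is contained in Q'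
  have hcent : Subgroup.centralizer (Q' : Set A) ≤ Q' := by
    intro c hc
    rw [Subgroup.mem_centralizer_iff] at hc
    have hcP : (↑c : Equiv.Perm (Fin q)) ∈ QP := by
      apply centralizer_le_of_card_prime hq QP hcardQP
      rw [Subgroup.mem_centralizer_iff]
      rintro h ⟨g', hg', rfl⟩
      have := hc g' hg'
      exact congrArg Subtype.val this
    obtain ⟨dd, hdd, hddc⟩ := hcP
    have : dd = c := Subtype.ext hddc
    rwa [← this]
  -- Frattini + index chain
  have hfr := Sylow.normalizer_sup_eq_top (G := A) (N := B') P
  have h1 : B'.index = B'.relIndex (normalizer (Q' : Set A)) := by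
    rw [← Subgroup.relIndex_top_right, ← hfr, Subgroup.relIndex_sup_right]
  have h2 : B'.relIndex (normalizer (Q' : Set A)) ∣ Q'.relIndex (normalizer (Q' : Set A)) :=
    Subgroup.relIndex_dvd_of_le_left _ (Subgroup.map_subtype_le (P : Subgroup B'))
  have h3 : Q'.relIndex (normalizer (Q' : Set A)) ∣ q - 1 := by
    have hker : (Q'.normalizerMonoidHom).ker ≤ Q'.subgroupOf (normalizer (Q' : Set A)) := by
      rw [Subgroup.normalizerMonoidHom_ker]
      exact fun x hx => Subgroup.mem_subgroupOf.mpr (hcent (Subgroup.mem_subgroupOf.mp hx))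
    have h4 : (Q'.subgroupOf (normalizer (Q' : Set A))).index ∣ (Q'.normalizerMonoidHom).ker.index :=
      Subgroup.index_dvd_of_le hker
    have h5 : (Q'.normalizerMonoidHom).ker.index = Nat.card (Q'.normalizerMonoidHom).range :=
      Subgroup.index_ker _
    have h6 : Nat.card (Q'.normalizerMonoidHom).range ∣ Nat.card (MulAut Q') :=
      Subgroup.card_subgroup_dvd_card _
    have h7 : Nat.card (MulAut Q') = q - 1 := by
      haveI : IsCyclic Q' := isCyclic_of_prime_card hcardQ'
      rw [IsCyclic.card_mulAut, hcardQ', Nat.totient_prime hq]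
    exact dvd_trans h4 (h5 ▸ (h7 ▸ h6))
  have hfin : B'.index ∣ q - 1 := h1 ▸ dvd_trans h2 h3
  have hrel : B.relIndex A = B'.index := rfl
  exact hnd (dvd_trans (hrel ▸ hdvd) hfin)
end

section
/- Let q be prime and p < q a prime with p not dividing q−1. Let A be a subgroup of the n-fold direct product S_q × ⋯ × S_q such that each projection πᵢ(A) is a transitive subgroup of S_q, and let B be a normal subgroup of A. If p divides [A:B], then q divides [A:B]. -/
open Subgroup Equiv MulAction


section Aux

/-- relIndex times card equals card, for `H ≤ K`. -/
lemma aux_relIndex_mul_card {G : Type*} [Group G] {H K : Subgroup G} (h : H ≤ K) :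
    H.relIndex K * Nat.card H = Nat.card K := by
  have h1 : Nat.card (H.subgroupOf K) = Nat.card H :=
    Nat.card_congr (Subgroup.subgroupOfEquivOfLe h).toEquiv
  rw [Subgroup.relIndex, mul_comm, ← h1, Subgroup.card_mul_index]

/-- Cardinality factorization for a subgroup along a homomorphism. -/
lemma aux_card_map_mul {G H : Type*} [Group G] [Group H] (f : G →* H) (S : Subgroup G) :
    Nat.card (S.map f) * Nat.card (S ⊓ f.ker : Subgroup G) = Nat.card S := by
  have h1 : Nat.card S = Nat.card (↥S ⧸ (f.comp S.subtype).ker) *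
      Nat.card (f.comp S.subtype).ker :=
    Subgroup.card_eq_card_quotient_mul_card_subgroup _
  have h2 : Nat.card (↥S ⧸ (f.comp S.subtype).ker) = Nat.card (S.map f) := by
    have := QuotientGroup.quotientKerEquivRange (f.comp S.subtype)
    rw [MonoidHom.range_comp, Subgroup.range_subtype] at this
    exact Nat.card_congr this.toEquiv
  have h3 : Nat.card (f.comp S.subtype).ker = Nat.card (S ⊓ f.ker : Subgroup G) := by
    have e : (f.comp S.subtype).ker = (S ⊓ f.ker).subgroupOf S := by
      rw [← MonoidHom.comap_ker, inf_comm, Subgroup.inf_subgroupOf_right]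
      rfl
    rw [e]
    exact Nat.card_congr (Subgroup.subgroupOfEquivOfLe inf_le_left).toEquiv
  rw [h1, h2, h3]

end Aux


lemma aux_q_dvd_card {q : ℕ} (hq : q.Prime)
    (T M : Subgroup (Equiv.Perm (Fin q))) (hMT : M ≤ T)
    (htrans : ∀ a b : Fin q, ∃ g ∈ T, g a = b)
    (hnorm : ∀ g ∈ T, ∀ x ∈ M, g * x * g⁻¹ ∈ M)
    (hM : M ≠ ⊥) : q ∣ Nat.card M := by
  haveI : IsPretransitive ↥T (Fin q) := by
    constructor
    intro a b
    obtain ⟨g, hg, hgab⟩ := htrans a b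
    exact ⟨⟨g, hg⟩, hgab⟩
  set M' : Subgroup ↥T := M.subgroupOf T with hM'
  haveI : M'.Normal := by
    constructor
    intro x hx g
    simp only [hM', Subgroup.mem_subgroupOf] at hx ⊢
    exact hnorm g g.2 x hx
  obtain ⟨m, hmM, hm1⟩ := (Subgroup.bot_or_exists_ne_one M).resolve_left hM
  obtain ⟨a, ha⟩ : ∃ a : Fin q, m a ≠ a := by
    by_contra h
    push_neg at h
    exact hm1 (Equiv.ext h)
  set O : Set (Fin q) := MulAction.orbit M' a with hO
  have hblock : IsBlock ↥T O := IsBlock.orbit_of_normal a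
  have hane : a ∈ O := MulAction.mem_orbit_self a
  have hdvd : O.ncard ∣ q := by
    simpa using hblock.ncard_dvd_card ⟨a, hane⟩
  have hma : m a ∈ O := by
    refine ⟨⟨⟨m, hMT hmM⟩, ?_⟩, rfl⟩
    simpa [hM', Subgroup.mem_subgroupOf]
  have hlt : 1 < O.ncard := by
    rw [Set.one_lt_ncard_iff O.toFinite]
    exact ⟨m a, a, hma, hane, ha⟩
  have hOq : O.ncard = q := (hq.eq_one_or_self_of_dvd _ hdvd).resolve_left (by omega)
  have hq_card : q = (stabilizer M' a).index := by
    rw [Subgroup.index_eq_card, ← Nat.card_congr (MulAction.orbitEquivQuotientStabilizer M' a),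
      Nat.card_coe_set_eq, ← hO, hOq]
  have : q ∣ Nat.card M' := by
    have h2 := Subgroup.index_dvd_card (stabilizer M' a)
    rwa [← hq_card] at h2
  rwa [Nat.card_congr (Subgroup.subgroupOfEquivOfLe hMT).toEquiv] at this


/-- Centralizer of a full cycle in `Perm (Fin q)` is its cyclic group. -/
lemma aux_centralizer {q : ℕ} (hq : q.Prime) {σ : Equiv.Perm (Fin q)}
    (hordσ : orderOf σ = q) : ∀ τ : Equiv.Perm (Fin q), σ * τ = τ * σ →
      τ ∈ Subgroup.zpowers σ := by
  intro τ hτ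
  have hcyc : σ.IsCycle := Equiv.Perm.isCycle_of_prime_order''
    (by simpa using hq) (by simpa using hordσ)
  have hsupp : ∀ b, σ b ≠ b := by
    have hcard : σ.support.card = q := by
      rw [← hcyc.orderOf, hordσ]
    have huniv : σ.support = Finset.univ :=
      Finset.eq_univ_of_card _ (by simpa using hcard)
    intro b
    have : b ∈ σ.support := huniv ▸ Finset.mem_univ b
    exact Equiv.Perm.mem_support.mp this
  have hcomm : Commute τ σ := hτ.symm
  haveI : NeZero q := ⟨hq.pos.ne'⟩
  set a : Fin q := ⟨0, hq.pos⟩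
  obtain ⟨k, hk⟩ := hcyc.exists_zpow_eq (hsupp a) (hsupp (τ a))
  refine ⟨k, ?_⟩
  ext b
  obtain ⟨m, hm⟩ := hcyc.exists_zpow_eq (hsupp a) (hsupp b)
  have h1 : (σ ^ k) b = (σ ^ k) ((σ ^ m) a) := by rw [hm]
  have h2 : (σ ^ k) ((σ ^ m) a) = (σ ^ m) ((σ ^ k) a) := by
    rw [← Equiv.Perm.mul_apply, ← Equiv.Perm.mul_apply, ← zpow_add, ← zpow_add, add_comm]
  have h3 : (σ ^ m) (τ a) = τ ((σ ^ m) a) := by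
    rw [← Equiv.Perm.mul_apply, ← Equiv.Perm.mul_apply, (hcomm.zpow_right m).eq]
  rw [h1, h2, hk, h3, hm]

lemma aux_prime_degree {q p : ℕ} (hq : q.Prime) (hp : p.Prime) (hnd : ¬ p ∣ (q - 1))
    {G : Type*} [Group G] [Finite G] (φ : G →* Equiv.Perm (Fin q))
    (hφ : Function.Injective φ)
    (N : Subgroup G) [N.Normal] (hqG : q ∣ Nat.card G) (hpd : p ∣ N.index) :
    q ∣ N.index := by
  haveI := Fact.mk hq
  by_contra hqi
  -- q divides the order of N
  have hcard : Nat.card N * N.index = Nat.card G := Subgroup.card_mul_index N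
  have hqN : q ∣ Nat.card N := by
    rcases hq.dvd_mul.mp (hcard ▸ hqG : q ∣ Nat.card N * N.index) with h | h
    · exact h
    · exact absurd h hqi
  -- an element of order q in N
  obtain ⟨x, hx⟩ := exists_prime_orderOf_dvd_card' (G := ↥N) q hqN
  set σG : G := (x : G) with hσG
  have hσN : σG ∈ N := x.2
  have hord : orderOf σG = q := by
    rw [← hx]
    exact orderOf_injective N.subtype Subtype.coe_injective x
  set σ : Equiv.Perm (Fin q) := φ σG with hσ
  have hordσ : orderOf σ = q := by rw [hσ, orderOf_injective φ hφ, hord]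
  -- the cyclic subgroup
  set Q : Subgroup G := Subgroup.zpowers σG with hQ
  have hcardQ : Nat.card Q = q := by rw [hQ, Nat.card_zpowers, hord]
  have hQN : Q ≤ N := Subgroup.zpowers_le.mpr hσN
  -- centralizer of Q is Q
  have hcentQ : Subgroup.centralizer (Q : Set G) = Q := by
    apply le_antisymm
    · intro g hg
      have h1 : σG * g = g * σG :=
        Subgroup.mem_centralizer_iff.mp hg σG (Subgroup.mem_zpowers σG)
      have h2 : σ * φ g = φ g * σ := by rw [hσ, ← map_mul, ← map_mul, h1]
      obtain ⟨k, hk⟩ := Subgroup.mem_zpowers_iff.mp (aux_centralizer hq hordσ (φ g) h2)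
      exact Subgroup.mem_zpowers_iff.mpr ⟨k, hφ (by rw [map_zpow, ← hσ, hk])⟩
    · intro g hg
      rw [Subgroup.mem_centralizer_iff]
      rintro h hh
      obtain ⟨i, rfl⟩ := hg
      obtain ⟨j, rfl⟩ := hh
      rw [← zpow_add, ← zpow_add, add_comm]
  -- Q is a Sylow q-subgroup of G
  have hpQ : IsPGroup q Q := IsPGroup.of_card (by rw [hcardQ, pow_one])
  have hGfact : Nat.card G ∣ Nat.factorial q := by
    have h1 : Nat.card G ∣ Nat.card (Equiv.Perm (Fin q)) := Subgroup.card_dvd_of_injective φ hφ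
    simpa [Nat.card_eq_fintype_card, Fintype.card_perm] using h1
  have hQi : ¬ q ∣ Q.index := by
    intro hcon
    have h1 : q * q ∣ Nat.card G := by
      rw [← Subgroup.card_mul_index Q, hcardQ]
      exact mul_dvd_mul_left q hcon
    have h2 : q * q ∣ q * Nat.factorial (q - 1) := by
      refine h1.trans ?_
      rw [Nat.mul_factorial_pred hq.pos.ne']
      exact hGfact
    have h3 : q ∣ Nat.factorial (q - 1) := (mul_dvd_mul_iff_left hq.pos.ne').mp h2
    have h4 := (Nat.Prime.dvd_factorial hq).mp h3
    have h5 := hq.two_le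
    omega
  set P : Sylow q G := hpQ.toSylow hQi with hP
  have hPQ : (P : Subgroup G) = Q := IsPGroup.toSylow_coe hpQ hQi
  -- Frattini
  have hFrat : (normalizer (Q : Set G)) ⊔ N = ⊤ := by
    rw [← hPQ]
    exact Sylow.normalizer_sup_eq_top' P (hPQ ▸ hQN)
  have hidx : N.index = N.relIndex (normalizer (Q : Set G)) := by
    rw [← Subgroup.relIndex_top_right, ← hFrat, Subgroup.relIndex_sup_right]
  -- N.index divides q - 1
  have hdiv1 : N.relIndex (normalizer (Q : Set G)) ∣ Q.relIndex (normalizer (Q : Set G)) :=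
    Subgroup.relIndex_dvd_of_le_left _ hQN
  have hdiv2 : Q.relIndex (normalizer (Q : Set G)) ∣ q - 1 := by
    have hker : Q.normalizerMonoidHom.ker = Q.subgroupOf (normalizer (Q : Set G)) := by
      rw [Subgroup.normalizerMonoidHom_ker, hcentQ]
    have h1 : Q.relIndex (normalizer (Q : Set G)) = Nat.card Q.normalizerMonoidHom.range := by
      rw [Subgroup.relIndex, ← hker, Subgroup.index_ker]
    haveI : IsCyclic ↥Q := isCyclic_of_prime_card (p := q) hcardQ
    have h2 : Nat.card Q.normalizerMonoidHom.range ∣ Nat.card (MulAut ↥Q) :=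
      Subgroup.card_subgroup_dvd_card _
    rw [h1]
    refine h2.trans ?_
    rw [IsCyclic.card_mulAut, hcardQ, Nat.totient_prime hq]
  exact hnd (hpd.trans (hidx ▸ (hdiv1.trans hdiv2)))

lemma aux_main (p q : ℕ) (hp : p.Prime) (hq : q.Prime) (hnd : ¬ p ∣ (q - 1)) :
    ∀ n (A B : Subgroup (Fin n → Equiv.Perm (Fin q))),
      (∀ i : Fin n, ∀ a b : Fin q, ∃ f ∈ A, f i a = b) →
      B ≤ A → (∀ g ∈ A, ∀ x ∈ B, g * x * g⁻¹ ∈ B) →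
      p ∣ B.relIndex A → q ∣ B.relIndex A := by
  intro n
  induction n with
  | zero =>
    intro A B htrans hBA hnorm hdvd
    exfalso
    have h1 : B.relIndex A * Nat.card B = Nat.card A := aux_relIndex_mul_card hBA
    have hA : Nat.card A = 1 := by
      haveI : Subsingleton (Fin 0 → Equiv.Perm (Fin q)) := by infer_instance
      exact Nat.card_eq_one_iff_unique.mpr ⟨inferInstance, inferInstance⟩
    rw [hA] at h1
    have hrel : B.relIndex A ∣ 1 := ⟨_, h1.symm⟩
    rw [Nat.dvd_one.mp hrel] at hdvd
    exact hp.one_lt.ne' (Nat.dvd_one.mp hdvd)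
  | succ n ih =>
    intro A B htrans hBA hnorm hdvd
    set r : (Fin (n+1) → Equiv.Perm (Fin q)) →* (Fin n → Equiv.Perm (Fin q)) :=
      { toFun := fun f => fun j => f j.castSucc
        map_one' := rfl
        map_mul' := fun _ _ => rfl } with hr
    set π : (Fin (n+1) → Equiv.Perm (Fin q)) →* Equiv.Perm (Fin q) :=
      Pi.evalMonoidHom (fun _ => Equiv.Perm (Fin q)) (Fin.last n) with hπ
    have hBA' : B.map r ≤ A.map r := Subgroup.map_mono hBA
    have hKle : B ⊓ r.ker ≤ A ⊓ r.ker := inf_le_inf_right _ hBA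
    have hcardB := aux_card_map_mul r B
    have hcardA := aux_card_map_mul r A
    have h1 : B.relIndex A * Nat.card B = Nat.card A := aux_relIndex_mul_card hBA
    have h2 := aux_relIndex_mul_card hBA'
    have h3 := aux_relIndex_mul_card hKle
    have hBpos : 0 < Nat.card B := Nat.card_pos
    have hprod : B.relIndex A =
        (B.map r).relIndex (A.map r) * (B ⊓ r.ker).relIndex (A ⊓ r.ker) := by
      refine Nat.eq_of_mul_eq_mul_right hBpos ?_
      calc B.relIndex A * Nat.card B = Nat.card A := h1
        _ = Nat.card (A.map r) * Nat.card (A ⊓ r.ker : Subgroup _) := hcardA.symm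
        _ = ((B.map r).relIndex (A.map r) * Nat.card (B.map r)) *
            ((B ⊓ r.ker).relIndex (A ⊓ r.ker) * Nat.card (B ⊓ r.ker : Subgroup _)) := by
            rw [h2, h3]
        _ = ((B.map r).relIndex (A.map r) * (B ⊓ r.ker).relIndex (A ⊓ r.ker)) *
            (Nat.card (B.map r) * Nat.card (B ⊓ r.ker : Subgroup _)) := by ring
        _ = ((B.map r).relIndex (A.map r) * (B ⊓ r.ker).relIndex (A ⊓ r.ker)) *
            Nat.card B := by rw [hcardB]
    rcases (Nat.Prime.dvd_mul hp).mp (hprod ▸ hdvd) with hcase | hcase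
    · -- induction on the first n coordinates
      have htrans' : ∀ i : Fin n, ∀ a b : Fin q, ∃ f ∈ A.map r, f i a = b := by
        intro i a b
        obtain ⟨f, hf, hfi⟩ := htrans i.castSucc a b
        exact ⟨r f, Subgroup.mem_map_of_mem r hf, hfi⟩
      have hnorm' : ∀ g ∈ A.map r, ∀ x ∈ B.map r, g * x * g⁻¹ ∈ B.map r := by
        rintro _ ⟨g, hg, rfl⟩ _ ⟨x, hx, rfl⟩
        exact ⟨g * x * g⁻¹, hnorm g hg x hx, by simp⟩
      have := ih (A.map r) (B.map r) htrans' hBA' hnorm' hcase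
      rw [hprod]
      exact this.mul_right _
    · -- the kernel part
      set K : Subgroup (Fin (n+1) → Equiv.Perm (Fin q)) := A ⊓ r.ker with hK
      set Kb : Subgroup (Fin (n+1) → Equiv.Perm (Fin q)) := B ⊓ r.ker with hKb
      have hinj : Function.Injective (π.comp K.subtype) := by
        intro x y hxy
        apply Subtype.ext
        funext j
        refine Fin.lastCases ?_ ?_ j
        · exact hxy
        · intro i
          have hx1 : r (x : Fin (n+1) → Equiv.Perm (Fin q)) = 1 := x.2.2
          have hy1 : r (y : Fin (n+1) → Equiv.Perm (Fin q)) = 1 := y.2.2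
          have := congr_fun (congrArg (fun f => (f : Fin n → Equiv.Perm (Fin q))) hx1) i
          have := congr_fun (congrArg (fun f => (f : Fin n → Equiv.Perm (Fin q))) hy1) i
          calc (x : Fin (n+1) → Equiv.Perm (Fin q)) i.castSucc
              = 1 := congr_fun hx1 i
            _ = (y : Fin (n+1) → Equiv.Perm (Fin q)) i.castSucc := (congr_fun hy1 i).symm
      by_cases hKbot : K = ⊥
      · exfalso
        have hKb1 : Nat.card (K : Subgroup _) = 1 := by
          rw [hKbot]; simp
        rw [hKb1] at h3
        have hrel : (B ⊓ r.ker).relIndex (A ⊓ r.ker) ∣ 1 := ⟨_, h3.symm⟩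
        rw [Nat.dvd_one.mp hrel] at hcase
        exact hp.one_lt.ne' (Nat.dvd_one.mp hcase)
      · -- q divides card of K
        have hmapbot : K.map π ≠ ⊥ := by
          obtain ⟨x, hxK, hx1⟩ := (Subgroup.bot_or_exists_ne_one K).resolve_left hKbot
          intro hcon
          apply hx1
          have : π x ∈ K.map π := Subgroup.mem_map_of_mem π hxK
          rw [hcon, Subgroup.mem_bot] at this
          have hx : (π.comp K.subtype) ⟨x, hxK⟩ = (π.comp K.subtype) 1 := by
            simpa using this
          simpa [Subtype.ext_iff] using hinj hx
        have hcardmap : Nat.card (K.map π) = Nat.card K := by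
          have e1 : K.map π = (π.comp K.subtype).range := by
            rw [MonoidHom.range_comp, Subgroup.range_subtype]
          rw [e1]
          refine Nat.card_congr ?_
          exact (Equiv.setCongr (MonoidHom.coe_range _)).trans
            (Equiv.ofInjective _ hinj).symm
        have hqK : q ∣ Nat.card K := by
          rw [← hcardmap]
          refine aux_q_dvd_card hq (A.map π) (K.map π)
            (Subgroup.map_mono inf_le_left) ?_ ?_ hmapbot
          · intro a b
            obtain ⟨f, hf, hfi⟩ := htrans (Fin.last n) a b
            exact ⟨π f, Subgroup.mem_map_of_mem π hf, hfi⟩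
          · rintro _ ⟨g, hg, rfl⟩ _ ⟨x, hx, rfl⟩
            refine ⟨g * x * g⁻¹, ⟨A.mul_mem (A.mul_mem hg hx.1) (A.inv_mem hg), ?_⟩, by simp⟩
            have hxker : r x = 1 := hx.2
            simp [MonoidHom.mem_ker, map_mul, hxker]
        -- apply the prime degree lemma
        haveI : (Kb.subgroupOf K).Normal := by
          constructor
          intro x hx g
          rw [Subgroup.mem_subgroupOf] at hx ⊢
          have hgA : (g : Fin (n+1) → Equiv.Perm (Fin q)) ∈ A := g.2.1
          refine ⟨hnorm _ hgA _ hx.1, ?_⟩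
          have hxker : r (x : Fin (n+1) → Equiv.Perm (Fin q)) = 1 := hx.2
          simp [MonoidHom.mem_ker, map_mul, hxker]
        have hfin : q ∣ (Kb.subgroupOf K).index :=
          aux_prime_degree hq hp hnd (π.comp K.subtype) hinj (Kb.subgroupOf K) hqK hcase
        rw [hprod]
        exact Dvd.dvd.mul_left hfin _


theorem stmt_12 (p q n : ℕ) (hp : p.Prime) (hq : q.Prime) (hpq : p < q)
    (hnd : ¬ p ∣ (q - 1))
    (A B : Subgroup (Fin n → Equiv.Perm (Fin q)))
    (htrans : ∀ i : Fin n, ∀ a b : Fin q, ∃ f ∈ A, f i a = b)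
    (hBA : B ≤ A)
    (hnorm : ∀ g ∈ A, ∀ x ∈ B, g * x * g⁻¹ ∈ B)
    (hdvd : p ∣ B.relIndex A) :
    q ∣ B.relIndex A := by
  exact aux_main p q hp hq hnd n A B htrans hBA hnorm hdvd
end

section
/- Let p < q be primes. Let G be a transitive subgroup of S_{pq}, N₁ a transitive normal subgroup of G, and N₂ a non-transitive normal subgroup of G with |N₁| = |N₂|. Then there is an injective homomorphism θ : G → S_p ≀ S_q (the wreath product acting imprimitively on {1,...,p} × {1,...,q}) such that: (i) θ(N₁) acts transitively on {1,...,p} × {1,...,q}; (ii) θ(N₂) lies in the kernel of the block-projection p₁ : S_p ≀ S_q → S_p; and (iii) for each i, the i-th coordinate projection πᵢ(θ(N₂)) is a transitive subgroup of S_q. -/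
/-! Since `G` normalizes `N₂` and is transitive, it permutes the `N₂`-orbits transitively, so
they all have one size `d`. As `N₁` is transitive, `pq` divides `|N₁| = |N₂|`, so `N₂` contains
an element of order `q`; its nontrivial cycles have length `q` and lie inside `N₂`-orbits, so
`d ≥ q`, while `d < pq` as `N₂` is intransitive. Hence there are exactly `p` orbits, each of size
`q`. Labelling the orbits by `Fin p` and the points of each orbit by `Fin q` conjugates `G` into
`S_p ≀ S_q`, with `N₂` fixing every block and transitive inside each. -/

open MulAction Pointwise

theorem Nat.eq_and_eq_of_mul_eq_prime_mul_prime {p q m d : ℕ} (hp : p.Prime) (hq : q.Prime)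
    (hpq : p < q) (h : m * d = p * q) (hqd : q ≤ d) (hm : m ≠ 1) : m = p ∧ d = q := by
  have hm0 : m ≠ 0 := by rintro rfl; simp [hp.ne_zero, hq.ne_zero] at h
  have hmp : m ≤ p := Nat.le_of_mul_le_mul_right ((Nat.mul_le_mul_left m hqd).trans h.le) hq.pos
  have hmq : q.Coprime m := Nat.coprime_of_lt_prime hm0 (hmp.trans_lt hpq) hq
  have hm_dvd : m ∣ p := hmq.symm.dvd_of_dvd_mul_right (Dvd.intro d h)
  obtain rfl : m = p := ((Nat.dvd_prime hp).mp hm_dvd).resolve_left hm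
  exact ⟨rfl, Nat.eq_of_mul_eq_mul_left hp.pos h⟩

namespace MulAction

variable {M α : Type*} [Group M] [MulAction M α]

theorem isPretransitive_subgroup_iff {H : Subgroup M} :
    IsPretransitive H α ↔ ∀ a b : α, ∃ g ∈ H, g • a = b := by
  simp only [isPretransitive_iff, Subtype.exists, Subgroup.mk_smul, exists_prop]

theorem orbit_subset_orbit_of_le {H K : Subgroup M} (hHK : H ≤ K) (a : α) :
    orbit H a ⊆ orbit K a := by
  rintro _ ⟨⟨g, hg⟩, rfl⟩
  exact ⟨⟨g, hHK hg⟩, rfl⟩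

theorem smul_orbit_eq_orbit_smul_of_mem_normalizer {N : Subgroup M} {g : M}
    (hg : g ∈ Subgroup.normalizer N) (a : α) : g • orbit N a = orbit N (g • a) := by
  ext b
  simp only [Set.mem_smul_set, mem_orbit_iff, Subtype.exists, Subgroup.mk_smul, exists_prop]
  constructor
  · rintro ⟨_, ⟨n, hn, rfl⟩, rfl⟩
    exact ⟨g * n * g⁻¹, (Subgroup.mem_normalizer_iff.mp hg n).mp hn, by simp [mul_smul]⟩
  · rintro ⟨n, hn, rfl⟩
    exact ⟨_, ⟨g⁻¹ * n * g, (Subgroup.mem_normalizer_iff''.mp hg n).mp hn, rfl⟩,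
      by simp [mul_smul]⟩

theorem smul_mem_orbit_smul_of_mem_normalizer {N : Subgroup M} {g : M}
    (hg : g ∈ Subgroup.normalizer N) {a b : α} (hb : b ∈ orbit N a) :
    g • b ∈ orbit N (g • a) :=
  smul_orbit_eq_orbit_smul_of_mem_normalizer hg a ▸ Set.smul_mem_smul_set hb

theorem card_orbit_eq_of_le_normalizer {G N : Subgroup M} [IsPretransitive G α]
    (hGN : G ≤ Subgroup.normalizer N) (a b : α) :
    Nat.card (orbit N a) = Nat.card (orbit N b) := by
  obtain ⟨⟨g, hg⟩, rfl⟩ := exists_smul_eq G a b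
  rw [Subgroup.mk_smul, ← smul_orbit_eq_orbit_smul_of_mem_normalizer (hGN hg),
    Nat.card_coe_set_eq, Nat.card_coe_set_eq, Set.ncard_smul_set]

theorem card_orbit_zpowers_of_orderOf_prime {g : M} (hg : (orderOf g).Prime) {a : α}
    (ha : g • a ≠ a) : Nat.card (orbit (Subgroup.zpowers g) a) = orderOf g := by
  have : Finite (Subgroup.zpowers g) := (orderOf_pos_iff.mp hg.pos).finite_zpowers.to_subtype
  have : Fintype (orbit (Subgroup.zpowers g) a) := (Set.finite_range _).fintype
  rw [Nat.card_eq_fintype_card, ← minimalPeriod_eq_card, ← period_eq_minimalPeriod]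
  exact (Nat.dvd_prime hg).mp (period_dvd_orderOf g a) |>.resolve_left
    (mt period_eq_one_iff.mp ha)

theorem exists_le_card_orbit_of_prime_dvd_card [FaithfulSMul M α] [Finite α] {N : Subgroup M}
    [Finite N] {q : ℕ} [Fact q.Prime] (hq : q ∣ Nat.card N) :
    ∃ a : α, q ≤ Nat.card (orbit N a) := by
  obtain ⟨g, hg⟩ := exists_prime_orderOf_dvd_card' q hq
  have hg' : orderOf (g : M) = q := (Subgroup.orderOf_coe g).trans hg
  have hne : (g : M) ≠ 1 := fun h ↦ (Fact.out : q.Prime).ne_one (by rw [← hg', h, orderOf_one])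
  obtain ⟨a, ha⟩ : ∃ a : α, (g : M) • a ≠ a := by
    by_contra! h
    exact hne (eq_of_smul_eq_smul fun a ↦ by rw [h, one_smul])
  refine ⟨a, ?_⟩
  rw [← hg', ← card_orbit_zpowers_of_orderOf_prime (hg'.symm ▸ Fact.out) ha,
    Nat.card_coe_set_eq, Nat.card_coe_set_eq]
  exact Set.ncard_le_ncard
    (orbit_subset_orbit_of_le ((Subgroup.zpowers_le (H := N)).mpr g.2) a) (Set.toFinite _)

theorem card_dvd_card_of_isPretransitive [Finite M] [IsPretransitive M α] [Nonempty α] :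
    Nat.card α ∣ Nat.card M :=
  index_stabilizer_of_transitive M (Classical.arbitrary α) ▸ (stabilizer M _).index_dvd_card

theorem card_quotient_mul_card_orbit [Finite α] {d : ℕ} (h : ∀ a : α, Nat.card (orbit M a) = d) :
    Nat.card (orbitRel.Quotient M α) * d = Nat.card α := by
  have := Fintype.ofFinite (orbitRel.Quotient M α)
  rw [Nat.card_congr (selfEquivSigmaOrbits' M α), Nat.card_sigma, Finset.sum_const_nat,
    Finset.card_univ, Nat.card_eq_fintype_card]
  rintro ⟨a⟩ -
  exact h a

theorem exists_equiv_prod_fst_eq_iff_mem_orbit [Finite α] {β γ : Type*} [Finite β] [Finite γ]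
    (hβ : Nat.card (orbitRel.Quotient M α) = Nat.card β)
    (hγ : ∀ a : α, Nat.card (orbit M a) = Nat.card γ) :
    ∃ e : α ≃ β × γ, ∀ a b, (e a).1 = (e b).1 ↔ a ∈ orbit M b := by
  obtain ⟨eβ⟩ := Finite.card_eq.mp hβ
  have eγ (ω : orbitRel.Quotient M α) : ω.orbit ≃ γ :=
    (Finite.card_eq.mp (Quotient.inductionOn' ω hγ : Nat.card ω.orbit = _)).some
  refine ⟨(selfEquivSigmaOrbits' M α).trans <| (Equiv.sigmaCongrRight eγ).trans <|
    (Equiv.sigmaEquivProd _ γ).trans (Equiv.prodCongr eβ (Equiv.refl γ)), fun a b ↦ ?_⟩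
  change eβ (Quotient.mk'' a) = eβ (Quotient.mk'' b) ↔ _
  rw [eβ.apply_eq_iff_eq, Quotient.eq'', orbitRel_apply]

theorem card_quotient_eq_and_card_orbit_eq_of_le_normalizer [FaithfulSMul M α] [Finite α]
    {p q : ℕ} (hp : p.Prime) (hq : q.Prime) (hpq : p < q) (hα : Nat.card α = p * q)
    {G N : Subgroup M} [Finite N] [IsPretransitive G α] (hGN : G ≤ Subgroup.normalizer N)
    (hqN : q ∣ Nat.card N) (hN : ¬ IsPretransitive N α) :
    Nat.card (orbitRel.Quotient N α) = p ∧ ∀ a : α, Nat.card (orbit N a) = q := by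
  have : Fact q.Prime := ⟨hq⟩
  obtain ⟨a₀, ha₀⟩ := exists_le_card_orbit_of_prime_dvd_card (α := α) hqN
  have hd (a : α) := card_orbit_eq_of_le_normalizer (α := α) hGN a a₀
  have hcount := card_quotient_mul_card_orbit hd
  have hQ : Nat.card (orbitRel.Quotient N α) ≠ 1 := fun h ↦
    hN ((pretransitive_iff_subsingleton_quotient N α).mpr (Nat.card_eq_one_iff_unique.mp h).1)
  obtain ⟨hQp, hdq⟩ := Nat.eq_and_eq_of_mul_eq_prime_mul_prime hp hq hpq (hcount.trans hα) ha₀ hQ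
  exact ⟨hQp, fun a ↦ (hd a).trans hdq⟩

end MulAction

theorem stmt_14_general (p q : ℕ) (hp : p.Prime) (hq : q.Prime) (hpq : p < q)
    (G N₁ N₂ : Subgroup (Equiv.Perm (Fin (p * q))))
    (hG : ∀ a b : Fin (p * q), ∃ σ ∈ G, σ a = b)
    (hN₁G : N₁ ≤ G) (hN₂G : N₂ ≤ G)
    (hnorm₂ : ∀ g ∈ G, ∀ x ∈ N₂, g * x * g⁻¹ ∈ N₂)
    (hN₁trans : ∀ a b : Fin (p * q), ∃ σ ∈ N₁, σ a = b)
    (hN₂trans : ¬ (∀ a b : Fin (p * q), ∃ σ ∈ N₂, σ a = b))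
    (hcard : Nat.card N₁ = Nat.card N₂) :
    ∃ θ : G →* Equiv.Perm (Fin p × Fin q),
      Function.Injective θ ∧
      -- θ(G) lands in the wreath product S_p ≀ S_q (block permutations)
      (∀ g : G, ∀ i : Fin p, ∀ j j' : Fin q, (θ g (i, j)).1 = (θ g (i, j')).1) ∧
      -- (i) θ(N₁) is transitive on Fin p × Fin q
      (∀ a b : Fin p × Fin q, ∃ g : G, (g : Equiv.Perm (Fin (p * q))) ∈ N₁ ∧ θ g a = b) ∧
      -- (ii) θ(N₂) ⊆ ker p₁
      (∀ g : G, (g : Equiv.Perm (Fin (p * q))) ∈ N₂ →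
        ∀ x : Fin p × Fin q, (θ g x).1 = x.1) ∧
      -- (iii) each coordinate projection of θ(N₂) is transitive on Fin q
      (∀ i : Fin p, ∀ a b : Fin q, ∃ g : G,
        (g : Equiv.Perm (Fin (p * q))) ∈ N₂ ∧ θ g (i, a) = (i, b)) := by
  have : NeZero (p * q) := ⟨(Nat.mul_pos hp.pos hq.pos).ne'⟩
  have := isPretransitive_subgroup_iff.mpr hG
  have := isPretransitive_subgroup_iff.mpr hN₁trans
  have hGN : G ≤ Subgroup.normalizer N₂ := fun g hg ↦ Subgroup.mem_normalizer_fintype (hnorm₂ g hg)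
  have hN₁card : Nat.card (Fin (p * q)) ∣ Nat.card N₁ := card_dvd_card_of_isPretransitive
  have hqN₂ : q ∣ Nat.card N₂ := hcard ▸ (Dvd.intro_left p rfl).trans (by simpa using hN₁card)
  obtain ⟨hQ, hO⟩ := card_quotient_eq_and_card_orbit_eq_of_le_normalizer hp hq hpq
    (Nat.card_fin _) hGN hqN₂ (mt isPretransitive_subgroup_iff.mp hN₂trans)
  obtain ⟨e, he⟩ := exists_equiv_prod_fst_eq_iff_mem_orbit (β := Fin p) (γ := Fin q)
    (by rw [hQ, Nat.card_fin]) (fun a ↦ by rw [hO, Nat.card_fin])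
  refine ⟨(Equiv.permCongrHom e).toMonoidHom.comp G.subtype,
    fun g h hgh ↦ Subtype.ext ((Equiv.permCongrHom e).injective hgh), ?_, ?_, ?_, ?_⟩
  · rintro ⟨g, hg⟩ i j j'
    change (e (g (e.symm (i, j)))).1 = (e (g (e.symm (i, j')))).1
    exact (he _ _).mpr (smul_mem_orbit_smul_of_mem_normalizer (hGN hg) ((he _ _).mp (by simp)))
  · intro a b
    obtain ⟨σ, hσ, hσab⟩ := hN₁trans (e.symm a) (e.symm b)
    exact ⟨⟨σ, hN₁G hσ⟩, hσ, by simp [hσab]⟩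
  · intro g hg x
    simpa using (he ((g : Equiv.Perm _) (e.symm x)) (e.symm x)).mpr ⟨⟨g, hg⟩, rfl⟩
  · intro i a b
    obtain ⟨⟨σ, hσ⟩, hσab : σ (e.symm (i, a)) = e.symm (i, b)⟩ :=
      (he (e.symm (i, b)) (e.symm (i, a))).mp (by simp)
    exact ⟨⟨σ, hN₂G hσ⟩, hσ, by simp [hσab]⟩

theorem stmt_14 (p q : ℕ) (hp : p.Prime) (hq : q.Prime) (hpq : p < q)
    (G N₁ N₂ : Subgroup (Equiv.Perm (Fin (p * q))))
    (hG : ∀ a b : Fin (p * q), ∃ σ ∈ G, σ a = b)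
    (hN₁G : N₁ ≤ G) (hN₂G : N₂ ≤ G)
    (hnorm₁ : ∀ g ∈ G, ∀ x ∈ N₁, g * x * g⁻¹ ∈ N₁)
    (hnorm₂ : ∀ g ∈ G, ∀ x ∈ N₂, g * x * g⁻¹ ∈ N₂)
    (hN₁trans : ∀ a b : Fin (p * q), ∃ σ ∈ N₁, σ a = b)
    (hN₂trans : ¬ (∀ a b : Fin (p * q), ∃ σ ∈ N₂, σ a = b))
    (hcard : Nat.card N₁ = Nat.card N₂) :
    ∃ θ : G →* Equiv.Perm (Fin p × Fin q),
      Function.Injective θ ∧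
      -- θ(G) lands in the wreath product S_p ≀ S_q (block permutations)
      (∀ g : G, ∀ i : Fin p, ∀ j j' : Fin q, (θ g (i, j)).1 = (θ g (i, j')).1) ∧
      -- (i) θ(N₁) is transitive on Fin p × Fin q
      (∀ a b : Fin p × Fin q, ∃ g : G, (g : Equiv.Perm (Fin (p * q))) ∈ N₁ ∧ θ g a = b) ∧
      -- (ii) θ(N₂) ⊆ ker p₁
      (∀ g : G, (g : Equiv.Perm (Fin (p * q))) ∈ N₂ →
        ∀ x : Fin p × Fin q, (θ g x).1 = x.1) ∧
      -- (iii) each coordinate projection of θ(N₂) is transitive on Fin q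
      (∀ i : Fin p, ∀ a b : Fin q, ∃ g : G,
        (g : Equiv.Perm (Fin (p * q))) ∈ N₂ ∧ θ g (i, a) = (i, b)) :=
  stmt_14_general p q hp hq hpq G N₁ N₂ hG hN₁G hN₂G hnorm₂ hN₁trans hN₂trans hcard
end

section
/- Let p < q be primes with p not dividing q−1. Then there is no subgroup G of S_{pq} containing a transitive normal subgroup N₁ and a non-transitive normal subgroup N₂ such that G/N₁ ≅ G/N₂. -/
open MulAction Equiv

lemma zmod_step (p q : ℕ) (hp : p.Prime) (hq : q.Prime) (hnd : ¬ p ∣ (q-1)) (k : ℤ)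
    (h : (q:ℤ) ∣ k ^ p - 1) : (q:ℤ) ∣ k - 1 := by
  haveI : Fact q.Prime := ⟨hq⟩
  have h1 : ((k : ZMod q)) ^ p = 1 := by
    have := (ZMod.intCast_zmod_eq_zero_iff_dvd _ q).mpr h
    push_cast at this
    linear_combination this
  have hk0 : (k : ZMod q) ≠ 0 := by
    intro h0
    rw [h0, zero_pow hp.ne_zero] at h1
    exact zero_ne_one h1
  set u : (ZMod q)ˣ := Units.mk0 _ hk0 with hu
  have hup : u ^ p = 1 := by
    ext; push_cast [hu]; exact h1
  have h2 : orderOf u ∣ p := orderOf_dvd_of_pow_eq_one hup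
  have h3 : orderOf u ∣ q - 1 := by
    have := orderOf_dvd_card (x := u)
    rwa [ZMod.card_units] at this
  have h4 : orderOf u = 1 := by
    rcases (Nat.dvd_prime hp).mp h2 with h | h
    · exact h
    · exact absurd (h ▸ h3) hnd
  have h5 : u = 1 := orderOf_eq_one_iff.mp h4
  have h6 : (k : ZMod q) = 1 := by
    have := congrArg Units.val h5
    simpa [hu] using this
  have : ((k - 1 : ℤ) : ZMod q) = 0 := by push_cast [h6]; ring
  exact (ZMod.intCast_zmod_eq_zero_iff_dvd _ q).mp this

lemma perm_block_aux {B : Type*} [Fintype B] (p q : ℕ) (hp : p.Prime) (hq : q.Prime)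
    (hpq : p < q) (hnd : ¬ p ∣ (q-1)) (hB : Nat.card B = q) (c x : Equiv.Perm B)
    (hc : orderOf c = q) (hx : x ^ p = 1) (hconj : x * c * x⁻¹ ∈ Subgroup.zpowers c) :
    x = 1 := by
  haveI : Fact p.Prime := ⟨hp⟩
  obtain ⟨k, hk⟩ := Subgroup.mem_zpowers_iff.mp hconj
  -- hk : c ^ k = x * c * x⁻¹
  have key : ∀ n : ℕ, x ^ n * c * (x ^ n)⁻¹ = c ^ (k ^ n) := by
    intro n
    induction n with
    | zero => simp
    | succ n ih =>
      have : x ^ (n+1) * c * (x ^ (n+1))⁻¹ = x * (x ^ n * c * (x ^ n)⁻¹) * x⁻¹ := by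
        group
      rw [this, ih, ← conj_zpow, ← hk, ← zpow_mul]
      congr 1
      push_cast [pow_succ]
      ring
  have hcp : c = c ^ (k ^ p) := by
    have := key p
    rwa [hx, inv_one, one_mul, mul_one] at this
  have hdvd : (q:ℤ) ∣ k ^ p - 1 := by
    rw [← hc]
    rw [orderOf_dvd_iff_zpow_eq_one]
    rw [zpow_sub, zpow_one, ← hcp, mul_inv_cancel]
  have hk1 : (q:ℤ) ∣ k - 1 := zmod_step p q hp hq hnd k hdvd
  have hck : c ^ k = c := by
    have : c ^ (k - 1) = 1 := by
      rw [← hc, orderOf_dvd_iff_zpow_eq_one] at hk1; exact hk1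
    calc c ^ k = c ^ (k - 1) * c ^ (1:ℤ) := by rw [← zpow_add]; ring_nf
    _ = c := by rw [this, one_mul, zpow_one]
  have hcomm : Commute x c := by
    have : x * c * x⁻¹ = c := by rw [← hk, hck]
    rw [Commute, SemiconjBy]
    calc x * c = (x * c * x⁻¹) * x := by group
    _ = c * x := by rw [this]
  -- if x = 1 we are done
  by_cases hx1 : x = 1
  · exact hx1
  exfalso
  have hordx : orderOf x = p := by
    rcases (Nat.dvd_prime hp).mp (orderOf_dvd_of_pow_eq_one hx) with h | h
    · exact absurd (orderOf_eq_one_iff.mp h) hx1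
    · exact h
  have hc1 : c ≠ 1 := by
    intro h; rw [h, orderOf_one] at hc; exact hq.one_lt.ne' hc.symm
  obtain ⟨b₀, hb₀⟩ : ∃ b₀, c b₀ ≠ b₀ := by
    by_contra h
    push_neg at h
    exact hc1 (Equiv.ext h)
  -- orbit of zpowers c at b₀ is everything
  have horb : MulAction.orbit (Subgroup.zpowers c) b₀ = Set.univ := by
    have hsub : MulAction.orbit (Subgroup.zpowers c) b₀ ⊆ Set.univ := Set.subset_univ _
    have hdvd2 : Nat.card (MulAction.orbit (Subgroup.zpowers c) b₀) ∣ q := by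
      have h1 := Subgroup.index_dvd_card (H := MulAction.stabilizer (Subgroup.zpowers c) b₀)
      rw [MulAction.index_stabilizer, Nat.card_coe_set_eq] at *
      rw [Nat.card_zpowers, hc] at h1
      exact h1
    have hne1 : Nat.card (MulAction.orbit (Subgroup.zpowers c) b₀) ≠ 1 := by
      intro h1
      have hb0mem : b₀ ∈ MulAction.orbit (Subgroup.zpowers c) b₀ := MulAction.mem_orbit_self _
      have hcb0mem : c b₀ ∈ MulAction.orbit (Subgroup.zpowers c) b₀ := by
        refine ⟨⟨c, Subgroup.mem_zpowers c⟩, rfl⟩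
      have hsing := Finite.card_le_one_iff_subsingleton.mp h1.le
      exact hb₀ (congrArg Subtype.val (hsing.elim ⟨_, hcb0mem⟩ ⟨_, hb0mem⟩))
    have hcard : Nat.card (MulAction.orbit (Subgroup.zpowers c) b₀) = q :=
      ((Nat.dvd_prime hq).mp hdvd2).resolve_left hne1
    apply Set.eq_of_subset_of_ncard_le hsub
    rw [Set.ncard_univ, hB, ← Nat.card_coe_set_eq, hcard]
  have htrans : ∀ b : B, ∃ n : ℤ, (c ^ n) b₀ = b := by
    intro b
    have : b ∈ MulAction.orbit (Subgroup.zpowers c) b₀ := by rw [horb]; trivial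
    obtain ⟨⟨g, hg⟩, hgb⟩ := this
    obtain ⟨n, hn⟩ := Subgroup.mem_zpowers_iff.mp hg
    exact ⟨n, by rw [hn]; exact hgb⟩
  -- fixed point of x exists
  have hpg : IsPGroup p (Subgroup.zpowers x) := by
    apply IsPGroup.of_card (n := 1)
    rw [Nat.card_zpowers, hordx, pow_one]
  have hmod := hpg.card_modEq_card_fixedPoints B
  have hfix : Nat.card (MulAction.fixedPoints (Subgroup.zpowers x) B) ≠ 0 := by
    intro h0
    rw [hB, h0] at hmod
    have : p ∣ q := (Nat.modEq_zero_iff_dvd).mp hmod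
    rcases (Nat.Prime.eq_one_or_self_of_dvd hq p this) with h | h
    · exact hp.one_lt.ne' h
    · omega
  have : Nonempty (MulAction.fixedPoints (Subgroup.zpowers x) B) := by
    rcases Nat.card_ne_zero.mp hfix with ⟨h1, _⟩
    exact h1
  obtain ⟨⟨b₁, hb₁⟩⟩ := this
  have hxb₁ : x b₁ = b₁ := hb₁ ⟨x, Subgroup.mem_zpowers x⟩
  -- now x fixes everything
  apply hx1
  apply Equiv.ext
  intro b
  obtain ⟨n, hn⟩ := htrans b₁
  obtain ⟨m, hm⟩ := htrans b
  have hcomm' : Commute x (c ^ (m - n)) := hcomm.zpow_right _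
  have hb' : (c ^ (m - n)) b₁ = b := by
    rw [zpow_sub]
    have : (c ^ n)⁻¹ b₁ = b₀ := by rw [← hn]; simp
    rw [Equiv.Perm.mul_apply, this, hm]
  calc x b = (x * c ^ (m-n)) b₁ := by rw [Equiv.Perm.mul_apply, hb']
  _ = (c ^ (m-n) * x) b₁ := by rw [hcomm']
  _ = b := by rw [Equiv.Perm.mul_apply, hxb₁, hb']

section counting

variable {Γ : Type*} [Group Γ] {X : Type*} [MulAction Γ X]

lemma orbit_card_dvd_s15 (H : Subgroup Γ) (a : X) :
    Nat.card (MulAction.orbit H a) ∣ Nat.card H := by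
  have h1 := Subgroup.index_dvd_card (H := MulAction.stabilizer H a)
  rwa [MulAction.index_stabilizer, ← Nat.card_coe_set_eq] at h1

lemma smul_orbit_normal (N : Subgroup Γ) [hN : N.Normal] (g : Γ) (a : X) :
    MulAction.orbit N (g • a) = (g • ·) '' (MulAction.orbit N a) := by
  ext b
  constructor
  · rintro ⟨⟨n, hn⟩, rfl⟩
    refine ⟨(g⁻¹ * n * g) • a, ⟨⟨g⁻¹ * n * g, by simpa using hN.conj_mem n hn g⁻¹⟩, rfl⟩, ?_⟩
    show g • ((g⁻¹ * n * g) • a) = (⟨n, hn⟩ : N) • (g • a)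
    rw [Subgroup.smul_def]
    rw [← mul_smul, ← mul_smul]
    congr 1
    group
  · rintro ⟨y, ⟨⟨n, hn⟩, rfl⟩, rfl⟩
    refine ⟨⟨g * n * g⁻¹, by simpa using hN.conj_mem n hn g⟩, ?_⟩
    show (⟨g * n * g⁻¹, _⟩ : N) • (g • a) = g • ((⟨n, hn⟩ : N) • a)
    rw [Subgroup.smul_def, Subgroup.smul_def]
    rw [← mul_smul, ← mul_smul]
    congr 1
    group

lemma orbit_card_eq_of_trans (N : Subgroup Γ) [N.Normal]
    (htrans : ∀ a b : X, ∃ g : Γ, g • a = b) (a b : X) :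
    Nat.card (MulAction.orbit N b) = Nat.card (MulAction.orbit N a) := by
  obtain ⟨g, rfl⟩ := htrans a b
  rw [smul_orbit_normal, Nat.card_coe_set_eq, Nat.card_coe_set_eq,
    Set.ncard_image_of_injective _ (MulAction.injective g)]

lemma card_eq_card_orbits_mul [Finite X] (H : Subgroup Γ) (e : ℕ)
    (he : ∀ a : X, Nat.card (MulAction.orbit H a) = e) :
    Nat.card X = Nat.card (MulAction.orbitRel.Quotient H X) * e := by
  classical
  letI := Fintype.ofFinite X
  letI := Fintype.ofFinite (MulAction.orbitRel.Quotient H X)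
  rw [Nat.card_congr (MulAction.selfEquivSigmaOrbits H X)]
  have h1 : Nat.card (Σ ω : MulAction.orbitRel.Quotient H X, MulAction.orbit H ω.out)
      = ∑ ω : MulAction.orbitRel.Quotient H X, Nat.card (MulAction.orbit H ω.out) := by
    rw [Nat.card_eq_fintype_card, Fintype.card_sigma]
    congr 1
    ext ω
    rw [Nat.card_eq_fintype_card]
  rw [h1]
  simp only [he, Finset.sum_const, smul_eq_mul, Finset.card_univ]
  rw [Nat.card_eq_fintype_card]

end counting

section blocks

variable {Γ : Type*} [Group Γ] {X : Type*} [MulAction Γ X]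

def resPerm (K : Subgroup Γ) (B : Set X) (hB : ∀ g : K, ∀ b ∈ B, (g:Γ) • b ∈ B) :
    K →* Equiv.Perm B where
  toFun g :=
    { toFun := fun b => ⟨(g:Γ) • b, hB g b b.2⟩
      invFun := fun b => ⟨(g:Γ)⁻¹ • b, by simpa using hB g⁻¹ b b.2⟩
      left_inv := fun b => by ext; simp
      right_inv := fun b => by ext; simp }
  map_one' := by ext b; simp
  map_mul' g h := by ext b; simp [mul_smul]

@[simp] lemma resPerm_apply (K : Subgroup Γ) (B : Set X) (hB) (g : K) (b : B) :
    ((resPerm K B hB g b : B) : X) = (g:Γ) • (b : X) := rfl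

variable (N : Subgroup Γ) [N.Normal]

lemma smul_mem_orbit_smul (g : Γ) {a b : X} (h : a ∈ MulAction.orbit N b) :
    g • a ∈ MulAction.orbit N (g • b) := by
  rw [smul_orbit_normal]; exact ⟨a, h, rfl⟩

def blockMap (g : Γ) : MulAction.orbitRel.Quotient N X → MulAction.orbitRel.Quotient N X :=
  Quotient.map' (g • ·) (fun a b h => by
    have h' : a ∈ MulAction.orbit N b := h
    exact smul_mem_orbit_smul N g h')

@[simp] lemma blockMap_mk (g : Γ) (a : X) :
    blockMap N g (Quotient.mk'' a) = Quotient.mk'' (g • a) := rfl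

def blockHom : Γ →* Equiv.Perm (MulAction.orbitRel.Quotient N X) where
  toFun g :=
    { toFun := blockMap N g
      invFun := blockMap N g⁻¹
      left_inv := fun ω => by
        induction ω using Quotient.inductionOn' with
        | h a => show blockMap N g⁻¹ (blockMap N g (Quotient.mk'' a)) = _
                 rw [blockMap_mk, blockMap_mk, inv_smul_smul]
      right_inv := fun ω => by
        induction ω using Quotient.inductionOn' with
        | h a => show blockMap N g (blockMap N g⁻¹ (Quotient.mk'' a)) = _
                 rw [blockMap_mk, blockMap_mk, smul_inv_smul] }
  map_one' := by
    ext ω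
    induction ω using Quotient.inductionOn' with
    | h a => show blockMap N 1 (Quotient.mk'' a) = _
             rw [blockMap_mk, one_smul]; rfl
  map_mul' g h := by
    ext ω
    induction ω using Quotient.inductionOn' with
    | h a => show blockMap N (g * h) (Quotient.mk'' a) = _
             rw [blockMap_mk, mul_smul]; rfl

@[simp] lemma blockHom_mk (g : Γ) (a : X) :
    blockHom N g (Quotient.mk'' a) = Quotient.mk'' (g • a) := rfl

end blocks

section helpers

variable {Γ : Type*} [Group Γ] {X : Type*} [MulAction Γ X]

lemma orbit_mono_subgroup {H K : Subgroup Γ} (h : H ≤ K) (a : X) :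
    MulAction.orbit H a ⊆ MulAction.orbit K a := by
  rintro _ ⟨⟨n, hn⟩, rfl⟩
  exact ⟨⟨n, h hn⟩, rfl⟩

lemma smul_fix_of_card_orbit_one [Finite X] {H : Subgroup Γ} {a : X}
    (h : Nat.card (MulAction.orbit H a) = 1) (g : H) : (g : Γ) • a = a := by
  have hsub := Finite.card_le_one_iff_subsingleton.mp h.le
  have h1 : (⟨(g:Γ) • a, ⟨g, rfl⟩⟩ : MulAction.orbit H a)
      = ⟨a, MulAction.mem_orbit_self a⟩ := hsub.elim _ _
  exact congrArg Subtype.val h1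

lemma elem_trivial_of_orbit_small [Finite X] (H : Subgroup Γ) (z : Γ) (hz : z ∈ H)
    (r : ℕ) (hr : r.Prime) (hordz : orderOf z = r) (m : ℕ) (hm : m < r)
    (horb : ∀ a : X, Nat.card (MulAction.orbit H a) = m) :
    ∀ a : X, z • a = a := by
  intro a
  have hsub : MulAction.orbit (Subgroup.zpowers z) a ⊆ MulAction.orbit H a :=
    orbit_mono_subgroup (Subgroup.zpowers_le.mpr hz) a
  have hdvd : Nat.card (MulAction.orbit (Subgroup.zpowers z) a) ∣ r := by
    have := orbit_card_dvd_s15 (Subgroup.zpowers z) a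
    rwa [Nat.card_zpowers, hordz] at this
  have hle : Nat.card (MulAction.orbit (Subgroup.zpowers z) a) ≤ m := by
    rw [← horb a, Nat.card_coe_set_eq, Nat.card_coe_set_eq]
    exact Set.ncard_le_ncard hsub (Set.toFinite _)
  have hone : Nat.card (MulAction.orbit (Subgroup.zpowers z) a) = 1 := by
    rcases (Nat.dvd_prime hr).mp hdvd with h | h
    · exact h
    · omega
  exact smul_fix_of_card_orbit_one hone ⟨z, Subgroup.mem_zpowers z⟩

end helpers

lemma dvd_pq_cases {e p q : ℕ} (hp : p.Prime) (hq : q.Prime)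
    (h : e ∣ p * q) : e = 1 ∨ e = p ∨ e = q ∨ e = p * q := by
  by_cases hpe : p ∣ e
  · obtain ⟨f, rfl⟩ := hpe
    have hf : f ∣ q := (mul_dvd_mul_iff_left hp.pos.ne').mp h
    rcases (Nat.dvd_prime hq).mp hf with rfl | rfl
    · right; left; simp
    · right; right; right; rfl
  · have hcop : Nat.Coprime p e := (Nat.Prime.coprime_iff_not_dvd hp).mpr hpe
    have he : e ∣ q := (Nat.Coprime.dvd_of_dvd_mul_left hcop.symm) h
    rcases (Nat.dvd_prime hq).mp he with rfl | rfl
    · left; rfl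
    · right; right; left; rfl

open Pointwise in
set_option maxHeartbeats 1000000 in
theorem stmt_15 (p q : ℕ) (hp : p.Prime) (hq : q.Prime) (hpq : p < q)
    (hnd : ¬ p ∣ (q - 1))
    (G : Subgroup (Equiv.Perm (Fin (p * q))))
    (N₁ N₂ : Subgroup G) [N₁.Normal] [N₂.Normal]
    (hN₁trans : ∀ a b : Fin (p * q), ∃ g : G, g ∈ N₁ ∧ (g : Equiv.Perm (Fin (p * q))) a = b)
    (hN₂trans : ¬ (∀ a b : Fin (p * q), ∃ g : G, g ∈ N₂ ∧ (g : Equiv.Perm (Fin (p * q))) a = b))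
    (hiso : Nonempty ((G ⧸ N₁) ≃* (G ⧸ N₂))) :
    False := by
  classical
  obtain ⟨iso⟩ := hiso
  haveI : Fact p.Prime := ⟨hp⟩
  haveI : Fact q.Prime := ⟨hq⟩
  -- basic facts about the action of ↥G on X
  have hsmul : ∀ (g : ↥G) (a : Fin (p * q)), g • a = (g : Equiv.Perm (Fin (p*q))) a := fun g a => rfl
  have hGtrans : ∀ a b : Fin (p * q), ∃ g : ↥G, g • a = b := by
    intro a b
    obtain ⟨g, _, hg⟩ := hN₁trans a b
    exact ⟨g, hg⟩
  have hfaithful : ∀ g : ↥G, (∀ a : Fin (p * q), g • a = a) → g = 1 := by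
    intro g hg
    have : (g : Equiv.Perm (Fin (p * q))) = 1 := Equiv.ext (fun a => hg a)
    exact Subtype.ext this
  have hcardX : Nat.card (Fin (p * q)) = p * q := by simp
  have hpqpos : 0 < p * q := Nat.mul_pos hp.pos hq.pos
  -- transitivity of N₁ in subgroup form
  have hN₁trans' : ∀ a b : Fin (p * q), ∃ n : N₁, n • a = b := by
    intro a b
    obtain ⟨g, hgm, hg⟩ := hN₁trans a b
    exact ⟨⟨g, hgm⟩, hg⟩
  have horbN₁ : ∀ a : Fin (p * q), MulAction.orbit N₁ a = Set.univ := by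
    intro a
    apply Set.eq_univ_of_forall
    intro b
    obtain ⟨n, hn⟩ := hN₁trans' a b
    exact ⟨n, hn⟩
  have hpq_dvd_N₁ : p * q ∣ Nat.card N₁ := by
    have h := orbit_card_dvd_s15 (Γ := ↥G) (X := Fin (p * q)) N₁ 0
    rwa [horbN₁ 0, Nat.card_congr (Equiv.Set.univ (Fin (p*q))), hcardX] at h
  -- card N₁ = card N₂ and index N₁ = index N₂
  have hquotcard : Nat.card (↥G ⧸ N₁) = Nat.card (↥G ⧸ N₂) := Nat.card_congr iso.toEquiv
  have hindex : N₁.index = N₂.index := by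
    rw [Subgroup.index_eq_card, Subgroup.index_eq_card, hquotcard]
  have hcardN : Nat.card N₁ = Nat.card N₂ := by
    have h1 := Subgroup.card_eq_card_quotient_mul_card_subgroup N₁
    have h2 := Subgroup.card_eq_card_quotient_mul_card_subgroup N₂
    rw [hquotcard] at h1
    have hpos : 0 < Nat.card (↥G ⧸ N₂) := Nat.card_pos
    exact Nat.eq_of_mul_eq_mul_left hpos (h1.symm.trans h2)
  have hpq_dvd_N₂ : p * q ∣ Nat.card N₂ := hcardN ▸ hpq_dvd_N₁
  -- common orbit size of N₂
  set e := Nat.card (MulAction.orbit N₂ (0 : Fin (p*q))) with he_def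
  have he : ∀ a : Fin (p*q), Nat.card (MulAction.orbit N₂ a) = e :=
    fun a => orbit_card_eq_of_trans N₂ hGtrans 0 a
  have hcount : p * q = Nat.card (MulAction.orbitRel.Quotient N₂ (Fin (p*q))) * e := by
    have := card_eq_card_orbits_mul N₂ e he
    rw [hcardX] at this
    exact this
  have hedvd : e ∣ p * q := ⟨_, by rw [hcount, Nat.mul_comm]⟩
  have hepq : e ≠ p * q := by
    intro hE
    apply hN₂trans
    intro a b
    have horb : MulAction.orbit N₂ a = Set.univ := by
      apply Set.eq_of_subset_of_ncard_le (Set.subset_univ _)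
      rw [Set.ncard_univ, hcardX, ← Nat.card_coe_set_eq, he a, hE]
    have hb : b ∈ MulAction.orbit N₂ a := by rw [horb]; trivial
    obtain ⟨⟨n, hn⟩, hnb⟩ := hb
    exact ⟨n, hn, hnb⟩
  have he1 : e ≠ 1 := by
    intro hE
    have hbot : N₂ = ⊥ := by
      rw [Subgroup.eq_bot_iff_forall]
      intro x hx
      have h1 : (x : ↥G) = 1 := by
        apply hfaithful
        intro a
        exact smul_fix_of_card_orbit_one (by rw [he a, hE]) (⟨x, hx⟩ : N₂)
      exact h1
    rw [hbot, Subgroup.card_bot, Nat.dvd_one] at hpq_dvd_N₂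
    have := hp.two_le
    have := hq.two_le
    nlinarith
  have hep : e ≠ p := by
    intro hE
    have hqN₂ : q ∣ Nat.card N₂ := dvd_trans ⟨p, Nat.mul_comm p q⟩ hpq_dvd_N₂
    obtain ⟨y, hy⟩ := exists_prime_orderOf_dvd_card' (G := N₂) q hqN₂
    have hordz : orderOf ((y : ↥G)) = q := by rw [Subgroup.orderOf_coe]; exact hy
    have hfix := elem_trivial_of_orbit_small N₂ ((y : ↥G)) y.2 q hq hordz p hpq
      (fun a => by rw [he a, hE])
    have h1 : ((y : ↥G)) = 1 := hfaithful _ hfix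
    rw [h1, orderOf_one] at hordz
    exact hq.one_lt.ne hordz
  have heq : e = q := by
    rcases dvd_pq_cases hp hq hedvd with h | h | h | h
    · exact absurd h he1
    · exact absurd h hep
    · exact h
    · exact absurd h hepq
  -- block structure
  rw [heq] at hcount
  set K := (blockHom N₂ (X := Fin (p*q))).ker with hKdef
  have hΩcard : Nat.card (MulAction.orbitRel.Quotient N₂ (Fin (p*q))) = p :=
    Nat.eq_of_mul_eq_mul_right hq.pos hcount.symm
  have hmemK : ∀ g : ↥G, g ∈ K → ∀ a : Fin (p*q), g • a ∈ MulAction.orbit N₂ a := by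
    intro g hg a
    have h1 : blockHom N₂ g = 1 := hg
    have h2 : Quotient.mk'' (g • a)
        = (Quotient.mk'' a : MulAction.orbitRel.Quotient N₂ (Fin (p*q))) := by
      have h3 := congrArg (fun (σ : Equiv.Perm (MulAction.orbitRel.Quotient N₂ (Fin (p*q)))) =>
        σ (Quotient.mk'' a)) h1
      simpa using h3
    exact Quotient.eq''.mp h2
  have hmemK' : ∀ g : ↥G, (∀ a : Fin (p*q), g • a ∈ MulAction.orbit N₂ a) → g ∈ K := by
    intro g hg
    show blockHom N₂ g = 1
    ext ω
    induction ω using Quotient.inductionOn' with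
    | h a =>
      show Quotient.mk'' (g • a) = Quotient.mk'' a
      exact Quotient.sound' (hg a)
  have hN₂K : N₂ ≤ K := fun n hn => hmemK' n (fun a => ⟨⟨n, hn⟩, rfl⟩)
  -- D = N₁ ⊓ K
  set D := N₁ ⊓ K with hDdef
  haveI hDnormal : D.Normal := Subgroup.normal_inf_normal N₁ K
  have hDK : D ≤ K := inf_le_right
  have hDN₁ : D ≤ N₁ := inf_le_left
  letI : Fintype (MulAction.orbitRel.Quotient N₂ (Fin (p*q))) := Fintype.ofFinite _
  have hcardPermΩ : Nat.card (Equiv.Perm (MulAction.orbitRel.Quotient N₂ (Fin (p*q))))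
      = Nat.factorial p := by
    rw [Nat.card_eq_fintype_card, Fintype.card_perm, ← Nat.card_eq_fintype_card, hΩcard]
  have hqnotfact : ¬ q ∣ Nat.factorial p := by
    intro hcon
    have := (Nat.Prime.dvd_factorial hq).mp hcon
    omega
  have hφ₁ : ∃ r : ℕ, r ∣ Nat.factorial p ∧ Nat.card N₁ = r * Nat.card D := by
    set φ₁ := (blockHom N₂ (X := Fin (p*q))).comp N₁.subtype with hφ₁def
    have hker : φ₁.ker = D.subgroupOf N₁ := by
      ext n
      simp only [MonoidHom.mem_ker, Subgroup.mem_subgroupOf, hDdef, Subgroup.mem_inf, hφ₁def,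
        MonoidHom.comp_apply, Subgroup.coe_subtype]
      constructor
      · intro h
        exact ⟨n.2, h⟩
      · intro h
        exact h.2
    refine ⟨Nat.card φ₁.range, hcardPermΩ ▸ Subgroup.card_subgroup_dvd_card _, ?_⟩
    have h1 := Subgroup.card_eq_card_quotient_mul_card_subgroup φ₁.ker
    have h2 : Nat.card (↥N₁ ⧸ φ₁.ker) = Nat.card φ₁.range :=
      Nat.card_congr (QuotientGroup.quotientKerEquivRange φ₁).toEquiv
    have h3 : Nat.card φ₁.ker = Nat.card D := by
      rw [hker]
      exact Nat.card_congr (Subgroup.subgroupOfEquivOfLe hDN₁).toEquiv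
    rw [h2, h3] at h1
    exact h1
  obtain ⟨r, hrdvd, hr⟩ := hφ₁
  have hqD : q ∣ Nat.card D := by
    have hq1 : q ∣ Nat.card N₁ := dvd_trans ⟨p, Nat.mul_comm p q⟩ hpq_dvd_N₁
    rw [hr] at hq1
    rcases (Nat.Prime.dvd_mul hq).mp hq1 with h | h
    · exact absurd (h.trans hrdvd) hqnotfact
    · exact h
  -- orbits of D are the orbits of N₂
  set e' := Nat.card (MulAction.orbit D (0 : Fin (p*q))) with he'def
  have he' : ∀ a : Fin (p*q), Nat.card (MulAction.orbit D a) = e' :=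
    fun a => orbit_card_eq_of_trans D hGtrans 0 a
  have hsubD : ∀ a : Fin (p*q), MulAction.orbit D a ⊆ MulAction.orbit N₂ a := by
    rintro a _ ⟨⟨d, hd⟩, rfl⟩
    exact hmemK d hd.2 a
  have he'le : e' ≤ q := by
    rw [he'def]
    have h1 : Nat.card (MulAction.orbit D (0:Fin (p*q))) ≤ Nat.card (MulAction.orbit N₂ (0:Fin (p*q))) := by
      rw [Nat.card_coe_set_eq, Nat.card_coe_set_eq]
      exact Set.ncard_le_ncard (hsubD 0) (Set.toFinite _)
    rw [he 0, heq] at h1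
    exact h1
  have he'count : p * q = Nat.card (MulAction.orbitRel.Quotient D (Fin (p*q))) * e' := by
    have hc := card_eq_card_orbits_mul D e' he'
    rw [hcardX] at hc
    exact hc
  have he'dvd : e' ∣ p * q := ⟨_, by rw [he'count, Nat.mul_comm]⟩
  have he'1 : e' ≠ 1 := by
    intro hE
    have hbot : D = ⊥ := by
      rw [Subgroup.eq_bot_iff_forall]
      intro x hx
      exact hfaithful x (fun a => smul_fix_of_card_orbit_one (by rw [he' a, hE]) (⟨x, hx⟩ : D))
    rw [hbot, Subgroup.card_bot, Nat.dvd_one] at hqD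
    exact hq.one_lt.ne' hqD
  have he'p : e' ≠ p := by
    intro hE
    obtain ⟨y, hy⟩ := exists_prime_orderOf_dvd_card' (G := D) q hqD
    have hordz : orderOf ((y : ↥G)) = q := by rw [Subgroup.orderOf_coe]; exact hy
    have hfix := elem_trivial_of_orbit_small D ((y : ↥G)) y.2 q hq hordz p hpq
      (fun a => by rw [he' a, hE])
    have h1 : ((y : ↥G)) = 1 := hfaithful _ hfix
    rw [h1, orderOf_one] at hordz
    exact hq.one_lt.ne hordz
  have he'q : e' = q := by
    rcases dvd_pq_cases hp hq he'dvd with h | h | h | h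
    · exact absurd h he'1
    · exact absurd h he'p
    · exact h
    · exfalso
      rw [h] at he'le
      nlinarith [hp.two_le, hq.two_le]
  have horbD : ∀ a : Fin (p*q), MulAction.orbit D a = MulAction.orbit N₂ a := by
    intro a
    apply Set.eq_of_subset_of_ncard_le (hsubD a)
    rw [← Nat.card_coe_set_eq, ← Nat.card_coe_set_eq, he a, heq, he' a, he'q]
  -- Sylow and Frattini
  obtain ⟨Q⟩ := (Sylow.nonempty : Nonempty (Sylow q ↥D))
  set Q' := Subgroup.map D.subtype (Q : Subgroup ↥D) with hQ'def
  set L := Subgroup.normalizer (Q' : Set ↥G) with hLdef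
  have hFrat : L ⊔ D = ⊤ := Sylow.normalizer_sup_eq_top Q
  have hN₁L : N₁ ⊔ L = ⊤ := by
    rw [← top_le_iff, ← hFrat]
    calc L ⊔ D ≤ L ⊔ N₁ := sup_le_sup_left hDN₁ L
    _ = N₁ ⊔ L := sup_comm _ _
  set A := L ⊓ N₁ with hAdef
  -- the action of ↥G on the set of blocks
  letI : MulAction ↥G (MulAction.orbitRel.Quotient N₂ (Fin (p*q))) :=
    MulAction.compHom _ (blockHom (X := Fin (p*q)) N₂)
  have hsmulΩ : ∀ (g : ↥G) (a : Fin (p*q)),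
      g • (Quotient.mk'' a : MulAction.orbitRel.Quotient N₂ (Fin (p*q)))
        = Quotient.mk'' (g • a) :=
    fun g a => rfl
  -- p divides the index of N₂
  have hp_dvd_indexN₂ : p ∣ N₂.index := by
    have horb : MulAction.orbit ↥G (Quotient.mk'' (0 : Fin (p*q))
        : MulAction.orbitRel.Quotient N₂ (Fin (p*q))) = Set.univ := by
      apply Set.eq_univ_of_forall
      intro ω
      induction ω using Quotient.inductionOn' with
      | h b =>
        obtain ⟨g, hg⟩ := hGtrans 0 b
        refine ⟨g, ?_⟩
        show g • (Quotient.mk'' (0 : Fin (p*q))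
          : MulAction.orbitRel.Quotient N₂ (Fin (p*q))) = _
        rw [hsmulΩ, hg]
    have hstabindex := MulAction.index_stabilizer ↥G (Quotient.mk'' (0 : Fin (p*q))
        : MulAction.orbitRel.Quotient N₂ (Fin (p*q)))
    rw [horb, Set.ncard_univ, hΩcard] at hstabindex
    have hle : N₂ ≤ MulAction.stabilizer ↥G (Quotient.mk'' (0 : Fin (p*q))
        : MulAction.orbitRel.Quotient N₂ (Fin (p*q))) := by
      intro n hn
      show n • _ = _
      rw [hsmulΩ]
      exact Quotient.sound' (⟨⟨n, hn⟩, rfl⟩ : (n : ↥G) • (0:Fin (p*q)) ∈ MulAction.orbit N₂ 0)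
    have := Subgroup.index_dvd_of_le hle
    rw [hstabindex] at this
    exact this
  -- p divides the cardinality of A
  have hpA : p ∣ Nat.card A := by
    have horbA : MulAction.orbit A (Quotient.mk'' (0 : Fin (p*q))
        : MulAction.orbitRel.Quotient N₂ (Fin (p*q))) = Set.univ := by
      apply Set.eq_univ_of_forall
      intro ω
      induction ω using Quotient.inductionOn' with
      | h b =>
        obtain ⟨n, hn⟩ := hN₁trans' 0 b
        have hmem : (n : ↥G) ∈ ((D : Set ↥G) * (A : Set ↥G)) := by
          have htop : (n : ↥G) ∈ (↑(D ⊔ L) : Set ↥G) := by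
            rw [sup_comm D L, hFrat]
            simp
          rw [Subgroup.normal_mul D L] at htop
          obtain ⟨d, hd, l, hl, hmul⟩ := htop
          have hlN₁ : l ∈ N₁ := by
            have hl2 : l = d⁻¹ * (n : ↥G) := by rw [← hmul]; group
            rw [hl2]
            exact N₁.mul_mem (N₁.inv_mem (hDN₁ hd)) n.2
          exact ⟨d, hd, l, Subgroup.mem_inf.mpr ⟨hl, hlN₁⟩, hmul⟩
        obtain ⟨d, hd, a', ha', hmul⟩ := hmem
        have hmul' : d * a' = (n : ↥G) := hmul
        refine ⟨⟨a', ha'⟩, ?_⟩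
        show (⟨a', ha'⟩ : A) • _ = _
        rw [Subgroup.smul_def, hsmulΩ]
        have hb : b = d • (a' • (0 : Fin (p*q))) := by
          rw [← mul_smul, hmul', ← Subgroup.smul_def, hn]
        rw [hb]
        exact (Quotient.sound' (hmemK d (hDK hd) (a' • 0))).symm
    have hdvd := orbit_card_dvd_s15 (Γ := ↥G) A (Quotient.mk'' (0 : Fin (p*q))
        : MulAction.orbitRel.Quotient N₂ (Fin (p*q)))
    rw [horbA, Nat.card_congr (Equiv.Set.univ _), hΩcard] at hdvd
    exact hdvd
  -- p divides the relative index of N₁ in L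
  have hrelindex : N₁.relIndex L = N₁.index := by
    have h1 := Subgroup.relIndex_sup_right L N₁
    rw [sup_comm L N₁, hN₁L, Subgroup.relIndex_top_right] at h1
    exact h1.symm
  have hpr : p ∣ N₁.relIndex L := by
    rw [hrelindex, hindex]
    exact hp_dvd_indexN₂
  -- the key per-block fact
  have hblock : ∀ x : ↥G, x ∈ K → x ∈ L → orderOf x = p → x = 1 := by
    intro x hxK hxL hxp
    apply hfaithful
    intro a
    letI : Fintype ↥(MulAction.orbit N₂ a) := Fintype.ofFinite _
    have hcardB : Nat.card ↥(MulAction.orbit N₂ a) = q := by rw [he a, heq]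
    have hKB : ∀ g : K, ∀ b ∈ MulAction.orbit N₂ a, (g : ↥G) • b ∈ MulAction.orbit N₂ a := by
      intro g b hb
      have h1 := hmemK g g.2 b
      rwa [MulAction.orbit_eq_iff.mpr hb] at h1
    set ρ := resPerm K (MulAction.orbit N₂ a) hKB with hρdef
    set φD := ρ.comp (Subgroup.inclusion hDK) with hφDdef
    set QB := Subgroup.map φD (Q : Subgroup ↥D) with hQBdef
    have hQB_pgroup : IsPGroup q ↥QB := Q.isPGroup'.map φD
    obtain ⟨nB, hnB⟩ := (IsPGroup.iff_card).mp hQB_pgroup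
    have hcardPermB : Nat.card (Equiv.Perm ↥(MulAction.orbit N₂ a)) = Nat.factorial q := by
      rw [Nat.card_eq_fintype_card, Fintype.card_perm, ← Nat.card_eq_fintype_card, hcardB]
    have hQBdvd : Nat.card ↥QB ∣ Nat.factorial q := by
      have h1 := Subgroup.card_subgroup_dvd_card QB
      rwa [hcardPermB] at h1
    -- QB is nontrivial
    have hQBne1 : Nat.card ↥QB ≠ 1 := by
      intro h1
      have hbot : QB = ⊥ := Subgroup.card_eq_one.mp h1
      have hQker : (Q : Subgroup ↥D) ≤ φD.ker := (Subgroup.map_eq_bot_iff _).mp hbot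
      have hkerindex := Subgroup.index_dvd_of_le hQker
      have htransD : MulAction.orbit φD.range
          (⟨a, MulAction.mem_orbit_self a⟩ : ↥(MulAction.orbit N₂ a)) = Set.univ := by
        apply Set.eq_univ_of_forall
        rintro ⟨b, hb⟩
        rw [← horbD] at hb
        obtain ⟨d, hd⟩ := hb
        refine ⟨⟨φD d, ⟨d, rfl⟩⟩, ?_⟩
        apply Subtype.ext
        show ((φD d) (⟨a, MulAction.mem_orbit_self a⟩ : ↥(MulAction.orbit N₂ a)) :
          ↥(MulAction.orbit N₂ a)).val = b
        rw [← hd]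
        rfl
      have hq_range : q ∣ Nat.card φD.range := by
        have hdvd := orbit_card_dvd_s15 (Γ := Equiv.Perm ↥(MulAction.orbit N₂ a)) φD.range
          (⟨a, MulAction.mem_orbit_self a⟩ : ↥(MulAction.orbit N₂ a))
        rw [htransD, Nat.card_congr (Equiv.Set.univ _), hcardB] at hdvd
        exact hdvd
      have hki : φD.ker.index = Nat.card φD.range := by
        rw [Subgroup.index_eq_card]
        exact Nat.card_congr (QuotientGroup.quotientKerEquivRange φD).toEquiv
      have hfinal : q ∣ ((Q : Subgroup ↥D)).index := by
        apply dvd_trans _ hkerindex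
        rw [hki]
        exact hq_range
      exact (Sylow.not_dvd_index Q) hfinal
    have hq2 : ¬ q * q ∣ Nat.factorial q := by
      intro hcon
      have hfacq : q * Nat.factorial (q-1) = Nat.factorial q := Nat.mul_factorial_pred hq.ne_zero
      obtain ⟨m, hm⟩ := hcon
      rw [← hfacq] at hm
      have hm' : Nat.factorial (q-1) = q * m := Nat.eq_of_mul_eq_mul_left hq.pos (by rw [hm]; ring)
      have h2 := (Nat.Prime.dvd_factorial hq).mp ⟨m, hm'⟩
      have := hq.two_le
      omega
    have hQBq : Nat.card ↥QB = q := by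
      rcases Nat.lt_or_ge nB 2 with h | h
      · match nB, h with
        | 0, _ => exact absurd (by rw [hnB, pow_zero]) hQBne1
        | 1, _ => rw [hnB, pow_one]
      · exfalso
        apply hq2
        calc q * q = q ^ 2 := by ring
        _ ∣ q ^ nB := pow_dvd_pow q h
        _ ∣ Nat.factorial q := hnB ▸ hQBdvd
    -- generator of QB
    obtain ⟨c₀, hc₀⟩ := exists_prime_orderOf_dvd_card' (G := ↥QB) q (by rw [hQBq])
    have hordc : orderOf ((c₀ : Equiv.Perm ↥(MulAction.orbit N₂ a))) = q := by
      rw [Subgroup.orderOf_coe]; exact hc₀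
    have hzpow : Subgroup.zpowers ((c₀ : Equiv.Perm ↥(MulAction.orbit N₂ a))) = QB := by
      apply Subgroup.eq_of_le_of_card_ge (Subgroup.zpowers_le.mpr c₀.2)
      rw [hQBq, Nat.card_zpowers, hordc]
    have hxbp : (ρ ⟨x, hxK⟩) ^ p = 1 := by
      rw [← map_pow]
      have hxp1 : (⟨x, hxK⟩ : K) ^ p = 1 := by
        apply Subtype.ext
        show x ^ p = 1
        have h0 := pow_orderOf_eq_one x
        rwa [hxp] at h0
      rw [hxp1, map_one]
    have hconj : (ρ ⟨x, hxK⟩) * (c₀ : Equiv.Perm ↥(MulAction.orbit N₂ a)) * (ρ ⟨x, hxK⟩)⁻¹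
        ∈ Subgroup.zpowers ((c₀ : Equiv.Perm ↥(MulAction.orbit N₂ a))) := by
      rw [hzpow]
      obtain ⟨v, hvQ, hvc⟩ := c₀.2
      have hvQ' : (D.subtype v) ∈ Q' := ⟨v, hvQ, rfl⟩
      have hxu : x * (D.subtype v) * x⁻¹ ∈ Q' :=
        (Subgroup.mem_normalizer_iff.mp hxL _).mp hvQ'
      obtain ⟨v', hv'Q, hv'⟩ := hxu
      have hm : (⟨x, hxK⟩ : K) * (Subgroup.inclusion hDK v) * (⟨x, hxK⟩ : K)⁻¹
          = Subgroup.inclusion hDK v' := by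
        apply Subtype.ext
        show x * ((Subgroup.inclusion hDK v : K) : ↥G) * x⁻¹ = ((Subgroup.inclusion hDK v' : K) : ↥G)
        have h1 : ((Subgroup.inclusion hDK v : K) : ↥G) = D.subtype v := rfl
        have h2 : ((Subgroup.inclusion hDK v' : K) : ↥G) = D.subtype v' := rfl
        rw [h1, h2, hv']
      have hρv : ρ (Subgroup.inclusion hDK v) = (c₀ : Equiv.Perm ↥(MulAction.orbit N₂ a)) := by
        rw [← hvc]
        rfl
      rw [← hρv, ← map_inv, ← map_mul, ← map_mul, hm]
      exact ⟨v', hv'Q, rfl⟩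
    have hxb1 : (ρ ⟨x, hxK⟩) = 1 :=
      perm_block_aux p q hp hq hpq hnd hcardB _ _ hordc hxbp hconj
    have hfix : x • a = ((ρ ⟨x, hxK⟩) (⟨a, MulAction.mem_orbit_self a⟩ :
        ↥(MulAction.orbit N₂ a)) : ↥(MulAction.orbit N₂ a)).val := rfl
    rw [hfix, hxb1]
    rfl
  -- final counting
  set φL := (blockHom N₂ (X := Fin (p*q))).comp L.subtype with hφLdef
  have hpkerL : ¬ p ∣ Nat.card φL.ker := by
    intro hcon
    obtain ⟨ξ, hξ⟩ := exists_prime_orderOf_dvd_card' (G := φL.ker) p hcon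
    have hx1 : orderOf ((ξ : ↥L) : ↥G) = p := by
      rw [Subgroup.orderOf_coe, Subgroup.orderOf_coe]; exact hξ
    have hxK : ((ξ : ↥L) : ↥G) ∈ K := ξ.2
    have hxL : ((ξ : ↥L) : ↥G) ∈ L := (ξ : ↥L).2
    have hx2 := hblock _ hxK hxL hx1
    rw [hx2, orderOf_one] at hx1
    exact hp.one_lt.ne hx1
  have hrange : Nat.card φL.range ∣ Nat.factorial p :=
    hcardPermΩ ▸ Subgroup.card_subgroup_dvd_card _
  have hcardL : Nat.card ↥L = Nat.card φL.range * Nat.card φL.ker := by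
    have h1 := Subgroup.card_eq_card_quotient_mul_card_subgroup φL.ker
    rw [Nat.card_congr (QuotientGroup.quotientKerEquivRange φL).toEquiv] at h1
    exact h1
  have hcardL2 : Nat.card ↥L = N₁.relIndex L * Nat.card A := by
    have h1 := Subgroup.card_eq_card_quotient_mul_card_subgroup (N₁.subgroupOf L)
    have h2 : Nat.card (N₁.subgroupOf L) = Nat.card A := by
      have heqsub : N₁.subgroupOf L = A.subgroupOf L := by
        ext x
        simp only [Subgroup.mem_subgroupOf, hAdef, Subgroup.mem_inf]
        exact ⟨fun h => ⟨x.2, h⟩, fun h => h.2⟩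
      rw [heqsub]
      exact Nat.card_congr (Subgroup.subgroupOfEquivOfLe (show A ≤ L from inf_le_left)).toEquiv
    rw [h2, ← Subgroup.index_eq_card] at h1
    exact h1
  have hp2 : p * p ∣ Nat.card ↥L := by
    rw [hcardL2]
    exact mul_dvd_mul hpr hpA
  have hp2' : p * p ∣ Nat.factorial p := by
    have hcop : Nat.Coprime (p * p) (Nat.card φL.ker) := by
      have h1 : Nat.Coprime p (Nat.card φL.ker) := (hp.coprime_iff_not_dvd).mpr hpkerL
      exact Nat.Coprime.mul h1 h1
    rw [hcardL] at hp2
    exact (Nat.Coprime.dvd_of_dvd_mul_right hcop hp2).trans hrange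
  -- p * p ∣ p! is absurd
  have hfac : p * Nat.factorial (p - 1) = Nat.factorial p := Nat.mul_factorial_pred hp.ne_zero
  obtain ⟨m, hm⟩ := hp2'
  rw [← hfac] at hm
  have hm' : Nat.factorial (p - 1) = p * m := by
    have : p * Nat.factorial (p - 1) = p * (p * m) := by rw [hm]; ring
    exact Nat.eq_of_mul_eq_mul_left hp.pos this
  have : p ∣ Nat.factorial (p - 1) := ⟨m, hm'⟩
  have hple := (Nat.Prime.dvd_factorial hp).mp this
  have := hp.two_le
  omega
end
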